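/- arXiv:1906.09521 — 6 statements merged into one kernel-verified Lean document; each statement's English description precedes it below -/
import Mathlib

section
/- Let d ≥ 1 be an integer, p ≥ 1 and 0 ≤ q < p real numbers, η : [0,∞) → [0,∞) measurable, and w ∈ ℝ^d. Then, as an identity in [0,∞] (with the convention that the integrand is 0 at ξ = 0), ∫_{ℝ^d} η(|ξ|) · |⟨w, ξ⟩|^p / |ξ|^q · dξ = ϑ_η(p,q) · |w|^p, where ϑ_η(p,q) := 2 ω_{d−1} · (Γ((p+1)/2) Γ((d+1)/2) / Γ((p+d)/2)) · ∫_0^∞ t^{p−q+d−1} η(t) dt. -/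
open MeasureTheory
open scoped RealInnerProductSpace ENNReal

/-- `ω_m = π^{m/2}/Γ(m/2+1)`, the Lebesgue volume of the unit ball in `ℝ^m`. -/
noncomputable def omegaVol (m : ℝ) : ℝ := Real.pi ^ (m / 2) / Real.Gamma (m / 2 + 1)

/-!
In polar coordinates `ξ = r • u` the integrand splits into the radial factor `η r * r ^ (p - q)`
and the angular factor `|⟪w, u⟫| ^ p`, so everything reduces to the spherical moment
`∫_{S^{d-1}} |⟪e, u⟫| ^ p` for a unit vector `e`. That moment is computed by integrating
`|⟪e, ξ⟫| ^ p * exp (-‖ξ‖ ^ 2)` twice: in polar coordinates, where the radial part is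
`Γ((p + d) / 2) / 2`, and, after rotating `e` onto a coordinate axis, as a product of
one-dimensional Gaussian moments `∫ |t| ^ s * exp (-t ^ 2) dt = Γ((s + 1) / 2)`, which gives
`√π ^ (d - 1) * Γ((p + 1) / 2)`. Finally `ω_{d-1} Γ((d + 1) / 2) = √π ^ (d - 1)`.
-/

open Metric Set Real

section Polar

variable {E : Type*} [NormedAddCommGroup E] [NormedSpace ℝ E] [Nontrivial E]
  [FiniteDimensional ℝ E] [MeasurableSpace E] [BorelSpace E] (μ : Measure E) [μ.IsAddHaarMeasure]

theorem lintegral_eq_lintegral_toSphere_mul_lintegral_Ioi {F : E → ℝ≥0∞} {g : ℝ → ℝ≥0∞}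
    {h : E → ℝ≥0∞} (hg : Measurable g) (hh : Measurable h)
    (hF : ∀ u : E, ‖u‖ = 1 → ∀ r : ℝ, 0 < r → F (r • u) = g r * h u) :
    ∫⁻ x, F x ∂μ = (∫⁻ u : sphere (0 : E) 1, h u ∂μ.toSphere) *
      ∫⁻ t in Ioi 0, ENNReal.ofReal (t ^ (Module.finrank ℝ E - 1)) * g t := by
  have hpolar := μ.measurePreserving_homeomorphUnitSphereProd.lintegral_comp_emb
    (homeomorphUnitSphereProd E).measurableEmbedding
    (fun y => F ((homeomorphUnitSphereProd E).symm y))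
  simp only [Homeomorph.symm_apply_apply] at hpolar
  calc ∫⁻ x, F x ∂μ = ∫⁻ x : ({0}ᶜ : Set E), F x ∂μ.comap Subtype.val := by
        rw [lintegral_subtype_comap (measurableSet_singleton 0).compl, restrict_compl_singleton]
    _ = ∫⁻ y, h y.1 * g y.2 ∂μ.toSphere.prod (.volumeIoiPow (Module.finrank ℝ E - 1)) := by
        rw [hpolar]
        refine lintegral_congr fun y => ?_
        rw [homeomorphUnitSphereProd_symm_apply_coe,
          hF _ (mem_sphere_zero_iff_norm.1 y.1.2) _ y.2.2, mul_comm]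
    _ = _ := by
        rw [lintegral_prod_mul (f := fun u : sphere (0 : E) 1 => h u)
          (g := fun t : Ioi (0 : ℝ) => g t) (by fun_prop) (by fun_prop), Measure.volumeIoiPow,
          lintegral_withDensity_eq_lintegral_mul _
            (measurable_subtype_coe.pow_const _).ennreal_ofReal
            (g := fun t : Ioi (0 : ℝ) => g t) (by fun_prop)]
        exact congrArg _ (lintegral_subtype_comap measurableSet_Ioi
          fun t => ENNReal.ofReal (t ^ (Module.finrank ℝ E - 1)) * g t)

end Polar

section GaussianMoments

variable {s : ℝ}

theorem integrableOn_Ioi_rpow_mul_exp_neg_sq (hs : -1 < s) :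
    IntegrableOn (fun t : ℝ => t ^ s * exp (-t ^ 2)) (Ioi 0) := by
  simpa only [rpow_two] using integrableOn_rpow_mul_exp_neg_rpow hs two_pos

theorem integral_Ioi_rpow_mul_exp_neg_sq (hs : -1 < s) :
    ∫ t in Ioi (0 : ℝ), t ^ s * exp (-t ^ 2) = Gamma ((s + 1) / 2) / 2 := by
  have h := integral_rpow_mul_exp_neg_rpow two_pos hs
  simp only [rpow_two] at h
  rw [h]
  ring

theorem lintegral_Ioi_rpow_mul_exp_neg_sq (hs : -1 < s) :
    ∫⁻ t in Ioi (0 : ℝ), ENNReal.ofReal (t ^ s * exp (-t ^ 2)) =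
      ENNReal.ofReal (Gamma ((s + 1) / 2) / 2) := by
  rw [← integral_Ioi_rpow_mul_exp_neg_sq hs,
    ofReal_integral_eq_lintegral_ofReal (integrableOn_Ioi_rpow_mul_exp_neg_sq hs)]
  filter_upwards [ae_restrict_mem measurableSet_Ioi] with t ht
  exact mul_nonneg (rpow_nonneg ht.le _) (exp_nonneg _)

theorem lintegral_Ioi_pow_mul_rpow_mul_exp_neg_sq {n : ℕ} (hn : 1 ≤ n) (hs : -1 < s) :
    ∫⁻ t in Ioi (0 : ℝ), ENNReal.ofReal (t ^ (n - 1)) * ENNReal.ofReal (t ^ s * exp (-t ^ 2)) =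
      ENNReal.ofReal (Gamma ((s + n) / 2) / 2) := by
  have hsn : -1 < s + n - 1 := by
    have : (1 : ℝ) ≤ n := by exact_mod_cast hn
    linarith
  rw [← sub_add_cancel (s + n) 1, ← lintegral_Ioi_rpow_mul_exp_neg_sq hsn]
  refine setLIntegral_congr_fun measurableSet_Ioi fun t (ht : 0 < t) => ?_
  rw [← ENNReal.ofReal_mul (pow_nonneg ht.le _), ← mul_assoc, ← rpow_natCast, ← rpow_add ht,
    Nat.cast_sub hn, Nat.cast_one]
  ring_nf

theorem integrable_abs_rpow_mul_exp_neg_sq (hs : -1 < s) :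
    Integrable fun t : ℝ => |t| ^ s * exp (-t ^ 2) := by
  have h := integrable_fun_norm_addHaar (volume : Measure ℝ)
    (f := fun t : ℝ => t ^ s * exp (-t ^ 2))
  simp only [Real.norm_eq_abs, sq_abs, Module.finrank_self, tsub_self, pow_zero, one_smul] at h
  exact h.2 (integrableOn_Ioi_rpow_mul_exp_neg_sq hs)

theorem integral_abs_rpow_mul_exp_neg_sq (hs : -1 < s) :
    ∫ t : ℝ, |t| ^ s * exp (-t ^ 2) = Gamma ((s + 1) / 2) := by
  have h := integral_comp_abs (f := fun t => t ^ s * exp (-t ^ 2))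
  simp only [sq_abs] at h
  rw [h, integral_Ioi_rpow_mul_exp_neg_sq hs]
  ring

theorem prod_Gamma_single_add_one_div_two {ι : Type*} [Fintype ι] [DecidableEq ι] (i₀ : ι)
    (s : ℝ) :
    ∏ i, Gamma (((Pi.single i₀ s : ι → ℝ) i + 1) / 2) =
      √π ^ (Fintype.card ι - 1) * Gamma ((s + 1) / 2) := by
  rw [Fintype.prod_eq_mul_prod_compl i₀, Finset.prod_congr rfl fun i hi => by
      rw [Pi.single_eq_of_ne (Finset.mem_compl.1 hi ∘ Finset.mem_singleton.2)],
    Finset.prod_const, Finset.card_compl, Finset.card_singleton, Pi.single_eq_same, zero_add,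
    Gamma_one_half_eq, mul_comm]

theorem lintegral_abs_apply_rpow_mul_exp_neg_norm_sq {ι : Type*} [Fintype ι] (i₀ : ι)
    (hs : -1 < s) :
    ∫⁻ x : EuclideanSpace ℝ ι, ENNReal.ofReal (|x i₀| ^ s * exp (-‖x‖ ^ 2)) =
      ENNReal.ofReal (√π ^ (Fintype.card ι - 1) * Gamma ((s + 1) / 2)) := by
  classical
  set f : ι → ℝ → ℝ := fun i t => |t| ^ (Pi.single i₀ s : ι → ℝ) i * exp (-t ^ 2)
  have hexp : ∀ i, -1 < (Pi.single i₀ s : ι → ℝ) i := fun i => by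
    by_cases hi : i = i₀
    · simpa [hi] using hs
    · simp [hi]
  have hprod : ∀ x : EuclideanSpace ℝ ι, |x i₀| ^ s * exp (-‖x‖ ^ 2) = ∏ i, f i (x i) := by
    intro x
    rw [Finset.prod_mul_distrib, ← exp_sum, Fintype.prod_eq_single i₀ fun i hi => by
      rw [Pi.single_eq_of_ne hi, rpow_zero], Pi.single_eq_same, EuclideanSpace.norm_sq_eq]
    simp [Finset.sum_neg_distrib]
  have hint : Integrable fun y : ι → ℝ => ∏ i, f i (y i) :=
    Integrable.fintype_prod fun i => integrable_abs_rpow_mul_exp_neg_sq (hexp i)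
  calc ∫⁻ x : EuclideanSpace ℝ ι, ENNReal.ofReal (|x i₀| ^ s * exp (-‖x‖ ^ 2))
      = ∫⁻ y : ι → ℝ, ENNReal.ofReal (∏ i, f i (y i)) := by
        simp_rw [hprod]
        exact (EuclideanSpace.volume_preserving_symm_measurableEquiv_toLp ι).lintegral_comp_emb
          (MeasurableEquiv.measurableEmbedding _) fun y => ENNReal.ofReal (∏ i, f i (y i))
    _ = ENNReal.ofReal (∏ i, ∫ t, f i t) := by
        rw [← integral_fintype_prod_volume_eq_prod, ofReal_integral_eq_lintegral_ofReal hint]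
        exact ae_of_all _ fun y => Finset.prod_nonneg fun i _ =>
          mul_nonneg (rpow_nonneg (abs_nonneg _) _) (exp_nonneg _)
    _ = _ := by
        simp_rw [f, integral_abs_rpow_mul_exp_neg_sq (hexp _), prod_Gamma_single_add_one_div_two]

end GaussianMoments

section InnerProductSpace

variable {E : Type*} [NormedAddCommGroup E] [InnerProductSpace ℝ E] {s : ℝ}

theorem abs_inner_smul_left_rpow (w u : E) {r : ℝ} (hr : 0 ≤ r) :
    |⟪r • w, u⟫| ^ s = r ^ s * |⟪w, u⟫| ^ s := by
  rw [real_inner_smul_left, abs_mul, abs_of_nonneg hr, mul_rpow hr (abs_nonneg _)]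

theorem abs_inner_smul_right_rpow (w u : E) {r : ℝ} (hr : 0 ≤ r) :
    |⟪w, r • u⟫| ^ s = r ^ s * |⟪w, u⟫| ^ s := by
  rw [real_inner_comm, abs_inner_smul_left_rpow u w hr, real_inner_comm]

variable [FiniteDimensional ℝ E] [MeasurableSpace E] [BorelSpace E]

theorem lintegral_abs_inner_rpow_mul_exp_neg_norm_sq {e : E} (he : ‖e‖ = 1) (hs : -1 < s) :
    ∫⁻ x : E, ENNReal.ofReal (|⟪e, x⟫| ^ s * exp (-‖x‖ ^ 2)) =
      ENNReal.ofReal (√π ^ (Module.finrank ℝ E - 1) * Gamma ((s + 1) / 2)) := by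
  have he' : Orthonormal ℝ ((↑) : ({e} : Set E) → E) := by simp [he]
  obtain ⟨u, b, heu, hb⟩ := he'.exists_orthonormalBasis_extension
  let i₀ : u := ⟨e, heu rfl⟩
  have hbi₀ : b i₀ = e := by rw [hb]
  rw [Module.finrank_eq_card_basis b.toBasis, ← lintegral_abs_apply_rpow_mul_exp_neg_norm_sq i₀ hs,
    ← b.measurePreserving_repr.lintegral_comp_emb b.repr.toMeasurableEquiv.measurableEmbedding]
  simp [b.repr_apply_apply, hbi₀]

theorem lintegral_toSphere_abs_inner_rpow_of_norm_eq_one {e : E} (he : ‖e‖ = 1) (hs : -1 < s) :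
    ∫⁻ u : sphere (0 : E) 1, ENNReal.ofReal (|⟪e, (u : E)⟫| ^ s) ∂(volume : Measure E).toSphere =
      ENNReal.ofReal (2 * √π ^ (Module.finrank ℝ E - 1) * Gamma ((s + 1) / 2) /
        Gamma ((s + Module.finrank ℝ E) / 2)) := by
  have : Nontrivial E := nontrivial_of_ne e 0 (ne_zero_of_norm_ne_zero (he ▸ one_ne_zero))
  have hn : 1 ≤ Module.finrank ℝ E := Module.finrank_pos
  have hΓ : 0 < Gamma ((s + Module.finrank ℝ E) / 2) / 2 := by
    have : (1 : ℝ) ≤ Module.finrank ℝ E := by exact_mod_cast hn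
    exact half_pos (Gamma_pos_of_pos (by linarith))
  have hpolar := lintegral_eq_lintegral_toSphere_mul_lintegral_Ioi volume
    (F := fun x => ENNReal.ofReal (|⟪e, x⟫| ^ s * exp (-‖x‖ ^ 2)))
    (g := fun r => ENNReal.ofReal (r ^ s * exp (-r ^ 2)))
    (h := fun x => ENNReal.ofReal (|⟪e, x⟫| ^ s)) (by fun_prop) (by fun_prop)
    fun u hu r hr => by
      rw [abs_inner_smul_right_rpow e u hr.le, norm_smul_of_nonneg hr.le, hu, mul_one,
        ← ENNReal.ofReal_mul (by positivity)]
      ring_nf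
  rw [lintegral_abs_inner_rpow_mul_exp_neg_norm_sq he hs,
    lintegral_Ioi_pow_mul_rpow_mul_exp_neg_sq hn hs] at hpolar
  rw [(ENNReal.eq_div_iff (by simpa using hΓ) ENNReal.ofReal_ne_top).2
      (hpolar.trans (mul_comm _ _)).symm, ← ENNReal.ofReal_div_of_pos hΓ]
  congr 1
  field_simp

theorem lintegral_toSphere_abs_inner_rpow (w : E) (hs : 0 < s) :
    ∫⁻ u : sphere (0 : E) 1, ENNReal.ofReal (|⟪w, (u : E)⟫| ^ s) ∂(volume : Measure E).toSphere =
      ENNReal.ofReal (‖w‖ ^ s) * ENNReal.ofReal (2 * √π ^ (Module.finrank ℝ E - 1) *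
        Gamma ((s + 1) / 2) / Gamma ((s + Module.finrank ℝ E) / 2)) := by
  rcases eq_or_ne w 0 with rfl | hw
  · simp [zero_rpow hs.ne']
  obtain ⟨r, e, hr, he, rfl⟩ : ∃ r e, 0 ≤ r ∧ ‖e‖ = 1 ∧ w = r • e :=
    ⟨‖w‖, ‖w‖⁻¹ • w, norm_nonneg w, norm_smul_inv_norm hw, by simp [smul_smul, hw]⟩
  simp_rw [abs_inner_smul_left_rpow e _ hr, ENNReal.ofReal_mul (rpow_nonneg hr _),
    norm_smul_of_nonneg hr, he, mul_one]
  rw [lintegral_const_mul' _ _ ENNReal.ofReal_ne_top,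
    lintegral_toSphere_abs_inner_rpow_of_norm_eq_one he (by linarith)]

end InnerProductSpace

theorem omegaVol_sub_one_mul_Gamma {d : ℕ} (hd : 1 ≤ d) :
    omegaVol ((d : ℝ) - 1) * Gamma (((d : ℝ) + 1) / 2) = √π ^ (d - 1) := by
  have hΓ : Gamma (((d : ℝ) + 1) / 2) ≠ 0 := (Gamma_pos_of_pos (by positivity)).ne'
  rw [omegaVol, show ((d : ℝ) - 1) / 2 + 1 = ((d : ℝ) + 1) / 2 by ring, div_mul_cancel₀ _ hΓ,
    sqrt_eq_rpow, ← rpow_natCast, ← rpow_mul pi_nonneg, Nat.cast_sub hd, Nat.cast_one]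
  ring_nf

theorem lintegral_kernel_abs_inner_rpow_general (d : ℕ) (hd : 1 ≤ d) (p q : ℝ) (hp : 1 ≤ p)
    (η : ℝ → ℝ) (hη : Measurable η) (w : EuclideanSpace ℝ (Fin d)) :
    ∫⁻ ξ, ENNReal.ofReal (η ‖ξ‖ * (|⟪w, ξ⟫| ^ p / ‖ξ‖ ^ q)) =
      (ENNReal.ofReal
          (2 * omegaVol ((d : ℝ) - 1) *
            (Real.Gamma ((p + 1) / 2) * Real.Gamma (((d : ℝ) + 1) / 2) /
              Real.Gamma ((p + (d : ℝ)) / 2))) *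
        ∫⁻ t in Set.Ioi (0 : ℝ), ENNReal.ofReal (t ^ (p - q + (d : ℝ) - 1) * η t)) *
      ENNReal.ofReal (‖w‖ ^ p) := by
  have : Nonempty (Fin d) := Fin.pos_iff_nonempty.1 hd
  have hradial : ∫⁻ t in Ioi 0, ENNReal.ofReal (t ^ (d - 1)) * ENNReal.ofReal (η t * t ^ (p - q)) =
      ∫⁻ t in Ioi 0, ENNReal.ofReal (t ^ (p - q + d - 1) * η t) := by
    refine setLIntegral_congr_fun measurableSet_Ioi fun t (ht : 0 < t) => ?_
    rw [← ENNReal.ofReal_mul (pow_nonneg ht.le _), ← rpow_natCast, Nat.cast_sub hd, Nat.cast_one,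
      show p - q + d - 1 = (d - 1 : ℝ) + (p - q) by ring, rpow_add ht]
    ring_nf
  have hconst : 2 * √π ^ (d - 1) * Gamma ((p + 1) / 2) / Gamma ((p + d) / 2) =
      2 * omegaVol ((d : ℝ) - 1) *
        (Gamma ((p + 1) / 2) * Gamma (((d : ℝ) + 1) / 2) / Gamma ((p + d) / 2)) := by
    rw [← omegaVol_sub_one_mul_Gamma hd]
    ring
  rw [lintegral_eq_lintegral_toSphere_mul_lintegral_Ioi volume
      (g := fun r => ENNReal.ofReal (η r * r ^ (p - q)))
      (h := fun x => ENNReal.ofReal (|⟪w, x⟫| ^ p)) (by fun_prop) (by fun_prop)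
      fun u hu r hr => by
        rw [abs_inner_smul_right_rpow w u hr.le, norm_smul_of_nonneg hr.le, hu, mul_one,
          ← ENNReal.ofReal_mul' (by positivity), rpow_sub hr]
        ring_nf,
    lintegral_toSphere_abs_inner_rpow w (by linarith), finrank_euclideanSpace_fin, hradial,
    hconst]
  ring

/-- For `p ≥ 1`, `0 ≤ q < p`, a measurable kernel `η : [0,∞) → [0,∞)` and `w ∈ ℝ^d`, as an
identity in `[0,∞]` (the integrand vanishes at `ξ = 0` by the division-by-zero convention):
`∫_{ℝ^d} η(|ξ|) |⟨w,ξ⟩|^p / |ξ|^q dξ = ϑ_η(p,q) |w|^p`, where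
`ϑ_η(p,q) = 2 ω_{d-1} (Γ((p+1)/2)Γ((d+1)/2)/Γ((p+d)/2)) ∫_0^∞ t^{p-q+d-1} η(t) dt`. -/
theorem lintegral_kernel_abs_inner_rpow (d : ℕ) (hd : 1 ≤ d) (p q : ℝ) (hp : 1 ≤ p)
    (hq0 : 0 ≤ q) (hqp : q < p) (η : ℝ → ℝ) (hη : Measurable η)
    (hηnn : ∀ t, 0 ≤ t → 0 ≤ η t) (w : EuclideanSpace ℝ (Fin d)) :
    ∫⁻ ξ, ENNReal.ofReal (η ‖ξ‖ * (|⟪w, ξ⟫| ^ p / ‖ξ‖ ^ q)) =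
      (ENNReal.ofReal
          (2 * omegaVol ((d : ℝ) - 1) *
            (Real.Gamma ((p + 1) / 2) * Real.Gamma (((d : ℝ) + 1) / 2) /
              Real.Gamma ((p + (d : ℝ)) / 2))) *
        ∫⁻ t in Set.Ioi (0 : ℝ), ENNReal.ofReal (t ^ (p - q + (d : ℝ) - 1) * η t)) *
      ENNReal.ofReal (‖w‖ ^ p) :=
  lintegral_kernel_abs_inner_rpow_general d hd p q hp η hη w
end

section
/- Let Ω ⊂ ℝ^d be a bounded measurable set, and let ρ : Ω → ℝ be Lipschitz with Lipschitz constant L and satisfy ρ(x) ≥ c > 0 for all x ∈ Ω. Let p ≥ 1, 0 ≤ q < p, ε > 0, ℓ ≥ 0, and M > 0. Let ζ : [0,∞) → [0,∞) and η : [0,∞) → [0,∞) be measurable, with η(s) = 0 for all s > M. Let T : Ω → Ω be measurable with |T(x) − x| ≤ ℓ for all x ∈ Ω, and let u : Ω → ℝ be such that u ∘ T is measurable. Define (with the convention that division by zero gives zero, and η_ε(s) := ε^{−d} η(s/ε)): GAMS(u) := ε^{−1} ∫_{Ω×Ω} ζ( |u(T(x)) − u(T(y))|^p / (ε^{p−q−1}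 |T(x) − T(y)|^q) ) η_ε(|T(x) − T(y)|) ρ(x)² dx dy, and R(u) := ε^{−1} ∫_{Ω×Ω} ζ( |u(T(x)) − u(T(y))|^p / (ε^{p−q−1} |T(x) − T(y)|^q) ) η_ε(|T(x) − T(y)|) (ρ(y) − ρ(x)) ρ(x) dx dy. Then |R(u)| ≤ (L(Mε + 2ℓ)/c) · GAMS(u). -/
open MeasureTheory
open scoped ENNReal NNReal

/-! Where the kernel `η_ε(|T x - T y|)` does not vanish, `|T x - T y| ≤ M ε`, and since `T` moves
points by at most `ℓ`, also `|x - y| ≤ M ε + 2 ℓ`. There the Lipschitz bound and `ρ ≥ c` give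
`|ρ y - ρ x| ≤ L (M ε + 2 ℓ) ≤ (L (M ε + 2 ℓ) / c) ρ x`, so the integrand of `R(u)` is dominated
pointwise by `L (M ε + 2 ℓ) / c` times that of `GAMS(u)`. -/

lemma dist_le_dist_map_add_two_mul {X : Type*} [PseudoMetricSpace X] {T : X → X} {ℓ : ℝ}
    {x y : X} (hx : dist (T x) x ≤ ℓ) (hy : dist (T y) y ≤ ℓ) :
    dist x y ≤ dist (T x) (T y) + 2 * ℓ := by
  have := dist_triangle4 x (T x) (T y) y
  rw [dist_comm x (T x)] at this
  linarith

lemma LipschitzOnWith.abs_sub_le_div_mul {X : Type*} [PseudoMetricSpace X] {ρ : X → ℝ}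
    {L : ℝ≥0} {Ω : Set X} (hρ : LipschitzOnWith L ρ Ω) {x y : X} (hx : x ∈ Ω) (hy : y ∈ Ω)
    {r c : ℝ} (hxy : dist x y ≤ r) (hc : 0 < c) (hρx : c ≤ ρ x) :
    |ρ y - ρ x| ≤ L * r / c * ρ x := by
  have hLip : |ρ y - ρ x| ≤ L * r := by
    rw [← Real.dist_eq]
    exact (hρ.dist_le_mul y hy x hx).trans (by rw [dist_comm]; gcongr)
  have hLr : 0 ≤ L * r / c := div_nonneg ((abs_nonneg _).trans hLip) hc.le
  calc |ρ y - ρ x| ≤ L * r := hLip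
    _ = L * r / c * c := (div_mul_cancel₀ _ hc.ne').symm
    _ ≤ L * r / c * ρ x := by gcongr

lemma abs_mul_sub_mul_le_mul_sq {w a b C : ℝ} (hw : 0 ≤ w) (hb : 0 ≤ b)
    (hab : w ≠ 0 → |a - b| ≤ C * b) :
    |w * ((a - b) * b)| ≤ C * (w * b ^ 2) := by
  rcases eq_or_ne w 0 with rfl | hw0
  · simp
  calc |w * ((a - b) * b)| = w * (|a - b| * b) := by
        rw [abs_mul, abs_mul, abs_of_nonneg hw, abs_of_nonneg hb]
    _ ≤ w * (C * b * b) := by gcongr; exact hab hw0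
    _ = C * (w * b ^ 2) := by ring

lemma ofReal_abs_setIntegral_le_mul_setLIntegral {α : Type*} [MeasurableSpace α]
    {μ : Measure α} {s : Set α} (hs : MeasurableSet s) {f g : α → ℝ} {C : ℝ}
    (hf : ∀ x ∈ s, 0 ≤ f x) (hfg : ∀ x ∈ s, |g x| ≤ C * f x) :
    ENNReal.ofReal |∫ x in s, g x ∂μ| ≤ ENNReal.ofReal C * ∫⁻ x in s, ENNReal.ofReal (f x) ∂μ := by
  rw [← lintegral_const_mul' _ _ ENNReal.ofReal_ne_top, ← Real.enorm_eq_ofReal_abs]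
  refine (enorm_integral_le_lintegral_enorm _).trans (setLIntegral_mono' hs fun x hx => ?_)
  rw [Real.enorm_eq_ofReal_abs, ← ENNReal.ofReal_mul' (hf x hx)]
  exact ENNReal.ofReal_le_ofReal (hfg x hx)

theorem remainder_le_GAMS_general (d : ℕ) (Ω : Set (EuclideanSpace ℝ (Fin d)))
    (hΩm : MeasurableSet Ω)
    (ρ : EuclideanSpace ℝ (Fin d) → ℝ) (L : ℝ≥0) (hρL : LipschitzOnWith L ρ Ω)
    (c : ℝ) (hc : 0 < c) (hρc : ∀ x ∈ Ω, c ≤ ρ x)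
    (p q ε ℓ M : ℝ)
    (hε : 0 < ε)
    (ζ η : ℝ → ℝ)
    (hζnn : ∀ t, 0 ≤ ζ t) (hηnn : ∀ t, 0 ≤ η t)
    (hηM : ∀ t, M < t → η t = 0)
    (T : EuclideanSpace ℝ (Fin d) → EuclideanSpace ℝ (Fin d))
    (hTℓ : ∀ x ∈ Ω, ‖T x - x‖ ≤ ℓ)
    (u : EuclideanSpace ℝ (Fin d) → ℝ) :
    ENNReal.ofReal
        |ε⁻¹ *
          ∫ pr in Ω ×ˢ Ω,
            ζ (|u (T pr.1) - u (T pr.2)| ^ p / (ε ^ (p - q - 1) * ‖T pr.1 - T pr.2‖ ^ q)) *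
              (ε ^ (-(d : ℝ)) * η (‖T pr.1 - T pr.2‖ / ε)) * ((ρ pr.2 - ρ pr.1) * ρ pr.1)| ≤
      ENNReal.ofReal ((L * (M * ε + 2 * ℓ)) / c) *
        (ENNReal.ofReal ε⁻¹ *
          ∫⁻ pr in Ω ×ˢ Ω,
            ENNReal.ofReal
              (ζ (|u (T pr.1) - u (T pr.2)| ^ p / (ε ^ (p - q - 1) * ‖T pr.1 - T pr.2‖ ^ q)) *
                (ε ^ (-(d : ℝ)) * η (‖T pr.1 - T pr.2‖ / ε)) * ρ pr.1 ^ 2)) := by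
  set w : EuclideanSpace ℝ (Fin d) × EuclideanSpace ℝ (Fin d) → ℝ := fun pr =>
    ζ (|u (T pr.1) - u (T pr.2)| ^ p / (ε ^ (p - q - 1) * ‖T pr.1 - T pr.2‖ ^ q)) *
      (ε ^ (-(d : ℝ)) * η (‖T pr.1 - T pr.2‖ / ε))
  have hw : ∀ pr, 0 ≤ w pr := fun pr =>
    mul_nonneg (hζnn _) (mul_nonneg (Real.rpow_nonneg hε.le _) (hηnn _))
  have hw_support : ∀ pr, w pr ≠ 0 → dist (T pr.1) (T pr.2) ≤ M * ε := fun pr hpr => by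
    by_contra! h
    rw [dist_eq_norm, ← lt_div_iff₀ hε] at h
    exact hpr (by simp only [w, hηM _ h, mul_zero])
  have hpointwise : ∀ pr ∈ Ω ×ˢ Ω, |w pr * ((ρ pr.2 - ρ pr.1) * ρ pr.1)| ≤
      L * (M * ε + 2 * ℓ) / c * (w pr * ρ pr.1 ^ 2) := by
    rintro ⟨x, y⟩ ⟨hx, hy⟩
    refine abs_mul_sub_mul_le_mul_sq (hw _) (hc.le.trans (hρc x hx)) fun hxy => ?_
    refine hρL.abs_sub_le_div_mul hx hy ?_ hc (hρc x hx)
    have hTx := (dist_eq_norm _ _).trans_le (hTℓ x hx)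
    have hTy := (dist_eq_norm _ _).trans_le (hTℓ y hy)
    linarith [dist_le_dist_map_add_two_mul hTx hTy, hw_support _ hxy]
  rw [abs_mul, abs_of_nonneg (inv_nonneg.mpr hε.le), ENNReal.ofReal_mul (inv_nonneg.mpr hε.le),
    mul_left_comm]
  gcongr
  exact ofReal_abs_setIntegral_le_mul_setLIntegral (hΩm.prod hΩm)
    (fun pr _ => mul_nonneg (hw pr) (sq_nonneg _)) hpointwise

/-- Quantitative comparison of the remainder `R(u)` (with weight `(ρ(y)-ρ(x))ρ(x)`) with the
auxiliary energy `GAMS(u)` (with weight `ρ(x)²`): if `ρ` is `L`-Lipschitz on `Ω` with `ρ ≥ c > 0`,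
`η` vanishes on `(M,∞)` and `|T(x) - x| ≤ ℓ` on `Ω`, then
`|R(u)| ≤ (L(Mε + 2ℓ)/c) · GAMS(u)`. -/
theorem remainder_le_GAMS (d : ℕ) (Ω : Set (EuclideanSpace ℝ (Fin d)))
    (hΩm : MeasurableSet Ω) (hΩb : Bornology.IsBounded Ω)
    (ρ : EuclideanSpace ℝ (Fin d) → ℝ) (L : ℝ≥0) (hρL : LipschitzOnWith L ρ Ω)
    (c : ℝ) (hc : 0 < c) (hρc : ∀ x ∈ Ω, c ≤ ρ x)
    (p q ε ℓ M : ℝ) (hp : 1 ≤ p) (hq0 : 0 ≤ q) (hqp : q < p)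
    (hε : 0 < ε) (hℓ : 0 ≤ ℓ) (hM : 0 < M)
    (ζ η : ℝ → ℝ) (hζm : Measurable ζ) (hηm : Measurable η)
    (hζnn : ∀ t, 0 ≤ ζ t) (hηnn : ∀ t, 0 ≤ η t)
    (hηM : ∀ t, M < t → η t = 0)
    (T : EuclideanSpace ℝ (Fin d) → EuclideanSpace ℝ (Fin d)) (hTm : Measurable T)
    (hTmap : ∀ x ∈ Ω, T x ∈ Ω) (hTℓ : ∀ x ∈ Ω, ‖T x - x‖ ≤ ℓ)
    (u : EuclideanSpace ℝ (Fin d) → ℝ) (hu : Measurable fun x => u (T x)) :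
    ENNReal.ofReal
        |ε⁻¹ *
          ∫ pr in Ω ×ˢ Ω,
            ζ (|u (T pr.1) - u (T pr.2)| ^ p / (ε ^ (p - q - 1) * ‖T pr.1 - T pr.2‖ ^ q)) *
              (ε ^ (-(d : ℝ)) * η (‖T pr.1 - T pr.2‖ / ε)) * ((ρ pr.2 - ρ pr.1) * ρ pr.1)| ≤
      ENNReal.ofReal ((L * (M * ε + 2 * ℓ)) / c) *
        (ENNReal.ofReal ε⁻¹ *
          ∫⁻ pr in Ω ×ˢ Ω,
            ENNReal.ofReal
              (ζ (|u (T pr.1) - u (T pr.2)| ^ p / (ε ^ (p - q - 1) * ‖T pr.1 - T pr.2‖ ^ q)) *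
                (ε ^ (-(d : ℝ)) * η (‖T pr.1 - T pr.2‖ / ε)) * ρ pr.1 ^ 2)) :=
  remainder_le_GAMS_general d Ω hΩm ρ L hρL c hc hρc p q ε ℓ M hε ζ η hζnn hηnn hηM T hTℓ u
end

section
/- Let Ω ⊂ ℝ^d be a bounded measurable set and ρ : Ω → ℝ Lipschitz with 0 < c ≤ ρ(x) ≤ C < ∞ for all x ∈ Ω. Let p ≥ 1 and 0 ≤ q < p. Let ζ : [0,∞) → [0,∞) be concave, nondecreasing, with ζ(0) = 0, finite derivative at 0, and finite limit at +∞; let η : [0,∞) → [0,∞) be nonincreasing and compactly supported. Let ε_n > 0 with ε_n → 0, let T_n : Ω → Ω be measurable maps with ℓ_n := sup_{x∈Ω} |T_n(x) − x| satisfying ℓ_n/ε_n → 0, and let u_n : Ω → ℝ be functions with u_n ∘ T_n measurable. Define (with the convention that division by zero gives zero, and η_ε(s) := ε^{−d} η(s/ε)): ḠMS_n(u_n) := ε_n^{−1} ∫_{Ω×Ω} ζ( |u_n(T_n(x)) − u_n(T_n(y))|^p / (ε_n^{p−q−1} |T_n(x) − T_n(y)|^q) ) η_{ε_n}(|T_n(x)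 − T_n(y)|) ρ(x) ρ(y) dx dy, and GAMS_n(u_n) := the same integral with ρ(x)² in place of ρ(x)ρ(y). Then liminf_{n→∞} ḠMS_n(u_n) = liminf_{n→∞} GAMS_n(u_n) and limsup_{n→∞} ḠMS_n(u_n) = limsup_{n→∞} GAMS_n(u_n), as identities in [0,∞]. -/
/-!
Only pairs with `‖T_n x - T_n y‖ ≤ M ε_n` contribute to either energy, and for them
`‖x - y‖ ≤ M ε_n + 2 ℓ_n → 0`. Since `ρ` is Lipschitz and bounded below by `c > 0`, for every
`K > 1` the weights `ρ x * ρ y` and `ρ x ^ 2` eventually dominate each other up to the factor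
`K` on all contributing pairs, so the two energies do too; letting `K ↓ 1` identifies the
liminfs and the limsups.
-/

open MeasureTheory Filter Set
open scoped ENNReal NNReal

/-- The (transported, nonlocal) graph Mumford–Shah type energy with general weight `w`:
`ε⁻¹ ∫_{Ω×Ω} ζ( |u(T x) - u(T y)|^p / (ε^{p-q-1} |T x - T y|^q) ) η_ε(|T x - T y|) w(x,y) dx dy`,
where `η_ε(s) = ε^{-d} η(s/ε)`, as a value in `[0,∞]`. -/
noncomputable def gmsEnergy (d : ℕ) (Ω : Set (EuclideanSpace ℝ (Fin d))) (p q ε : ℝ)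
    (ζ η : ℝ → ℝ) (T : EuclideanSpace ℝ (Fin d) → EuclideanSpace ℝ (Fin d))
    (u : EuclideanSpace ℝ (Fin d) → ℝ)
    (w : EuclideanSpace ℝ (Fin d) → EuclideanSpace ℝ (Fin d) → ℝ) : ℝ≥0∞ :=
  ENNReal.ofReal ε⁻¹ *
    ∫⁻ pr in Ω ×ˢ Ω,
      ENNReal.ofReal
        (ζ (|u (T pr.1) - u (T pr.2)| ^ p / (ε ^ (p - q - 1) * ‖T pr.1 - T pr.2‖ ^ q)) *
          (ε ^ (-(d : ℝ)) * η (‖T pr.1 - T pr.2‖ / ε)) * w pr.1 pr.2)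

open Topology

namespace ENNReal

lemma le_of_forall_one_lt_le_mul {x y : ℝ≥0∞} (h : ∀ K : ℝ≥0, 1 < K → x ≤ K * y) : x ≤ y := by
  have hK : Tendsto (fun K : ℝ≥0 => (K : ℝ≥0∞) * y) (𝓝[>] 1) (𝓝 y) := by
    simpa using ENNReal.Tendsto.mul_const
      ((ENNReal.continuous_coe.tendsto 1).mono_left nhdsWithin_le_nhds) (Or.inl one_ne_zero)
  exact ge_of_tendsto hK (eventually_nhdsWithin_of_forall h)

variable {α : Type*} {f : Filter α} {F G : α → ℝ≥0∞}

lemma liminf_le_liminf_of_forall_eventually_le_mul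
    (h : ∀ K : ℝ≥0, 1 < K → ∀ᶠ x in f, F x ≤ K * G x) : liminf F f ≤ liminf G f :=
  le_of_forall_one_lt_le_mul fun K hK =>
    (liminf_le_liminf (h K hK)).trans_eq <|
      liminf_const_mul_of_ne_zero_of_ne_top (by simpa using hK.ne_bot) coe_ne_top

lemma limsup_le_limsup_of_forall_eventually_le_mul
    (h : ∀ K : ℝ≥0, 1 < K → ∀ᶠ x in f, F x ≤ K * G x) : limsup F f ≤ limsup G f :=
  le_of_forall_one_lt_le_mul fun K hK =>
    (limsup_le_limsup (h K hK)).trans_eq (limsup_const_mul_of_ne_top coe_ne_top)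

end ENNReal

lemma mul_le_mul_sq_of_abs_sub_le {a b c K : ℝ} (hc : 0 < c) (hca : c ≤ a)
    (hab : |a - b| ≤ (K - 1) * c) : a * b ≤ K * a ^ 2 := by
  have hK : 0 ≤ K - 1 := nonneg_of_mul_nonneg_left ((abs_nonneg _).trans hab) hc
  have ha : 0 ≤ a := hc.le.trans hca
  nlinarith [mul_le_mul_of_nonneg_left (abs_le.1 hab).1 ha,
    mul_nonneg hK (mul_nonneg ha (sub_nonneg.2 hca))]

lemma sq_le_mul_mul_of_abs_sub_le {a b c K : ℝ} (hc : 0 < c) (hca : c ≤ a) (hcb : c ≤ b)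
    (hab : |a - b| ≤ (K - 1) * c) : a ^ 2 ≤ K * (a * b) := by
  have hK : 0 ≤ K - 1 := nonneg_of_mul_nonneg_left ((abs_nonneg _).trans hab) hc
  have ha : 0 ≤ a := hc.le.trans hca
  nlinarith [mul_le_mul_of_nonneg_left (abs_le.1 hab).2 ha,
    mul_nonneg hK (mul_nonneg ha (sub_nonneg.2 hcb))]

lemma LipschitzOnWith.eventually_dist_le_of_tendsto {X Y ι : Type*} [PseudoMetricSpace X]
    [PseudoMetricSpace Y] {f : X → Y} {L : ℝ≥0} {s : Set X} (hf : LipschitzOnWith L f s)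
    {l : Filter ι} {T : ι → X → X} {ℓ ε : ι → ℝ} (M : ℝ)
    (hℓ : ∀ i, ∀ x ∈ s, dist (T i x) x ≤ ℓ i) (hℓ0 : Tendsto ℓ l (𝓝 0))
    (hε0 : Tendsto ε l (𝓝 0)) {τ : ℝ} (hτ : 0 < τ) :
    ∀ᶠ i in l, ∀ x ∈ s, ∀ y ∈ s, dist (T i x) (T i y) ≤ M * ε i → dist (f x) (f y) ≤ τ := by
  have hlim : Tendsto (fun i => L * (2 * ℓ i + M * ε i)) l (𝓝 0) := by
    simpa using tendsto_const_nhds.mul ((hℓ0.const_mul 2).add (hε0.const_mul M))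
  filter_upwards [hlim.eventually (ge_mem_nhds hτ)] with i hi x hx y hy hT
  have hxy : dist x y ≤ 2 * ℓ i + M * ε i := by
    have := dist_triangle4 x (T i x) (T i y) y
    rw [dist_comm x (T i x)] at this
    linarith [hℓ i x hx, hℓ i y hy]
  calc dist (f x) (f y) ≤ L * dist x y := hf.dist_le_mul x hx y hy
    _ ≤ L * (2 * ℓ i + M * ε i) := by gcongr
    _ ≤ τ := hi

lemma gmsEnergy_le_mul_of_weight_le {d : ℕ} {Ω : Set (EuclideanSpace ℝ (Fin d))}
    (hΩm : MeasurableSet Ω) {p q ε : ℝ} (hε : 0 < ε) {ζ η : ℝ → ℝ} (hζnn : ∀ t, 0 ≤ ζ t)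
    (hηnn : ∀ t, 0 ≤ η t) {M : ℝ} (hηM : ∀ t, M < t → η t = 0)
    {T : EuclideanSpace ℝ (Fin d) → EuclideanSpace ℝ (Fin d)} {u : EuclideanSpace ℝ (Fin d) → ℝ}
    {w₁ w₂ : EuclideanSpace ℝ (Fin d) → EuclideanSpace ℝ (Fin d) → ℝ} {K : ℝ≥0}
    (hw : ∀ x ∈ Ω, ∀ y ∈ Ω, ‖T x - T y‖ ≤ M * ε → w₁ x y ≤ K * w₂ x y) :
    gmsEnergy d Ω p q ε ζ η T u w₁ ≤ K * gmsEnergy d Ω p q ε ζ η T u w₂ := by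
  unfold gmsEnergy
  rw [mul_left_comm, ← lintegral_const_mul' _ _ ENNReal.coe_ne_top]
  refine mul_le_mul_right (setLIntegral_mono' (hΩm.prod hΩm) fun z hz => ?_) _
  by_cases hη : η (‖T z.1 - T z.2‖ / ε) = 0
  · simp [hη]
  have hT : ‖T z.1 - T z.2‖ ≤ M * ε := by
    by_contra! h
    exact hη (hηM _ ((lt_div_iff₀ hε).2 h))
  rw [← ENNReal.ofReal_coe_nnreal, ← ENNReal.ofReal_mul K.coe_nonneg]
  have hkernel : 0 ≤ ζ (|u (T z.1) - u (T z.2)| ^ p / (ε ^ (p - q - 1) * ‖T z.1 - T z.2‖ ^ q)) *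
      (ε ^ (-(d : ℝ)) * η (‖T z.1 - T z.2‖ / ε)) :=
    mul_nonneg (hζnn _) (mul_nonneg (Real.rpow_nonneg hε.le _) (hηnn _))
  exact ENNReal.ofReal_le_ofReal
    ((mul_le_mul_of_nonneg_left (hw z.1 hz.1 z.2 hz.2 hT) hkernel).trans_eq (by ring))

theorem liminf_limsup_GMSbar_eq_GAMS_general (d : ℕ) (Ω : Set (EuclideanSpace ℝ (Fin d)))
    (hΩm : MeasurableSet Ω)
    (ρ : EuclideanSpace ℝ (Fin d) → ℝ) (L : ℝ≥0) (hρL : LipschitzOnWith L ρ Ω)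
    (c C : ℝ) (hc : 0 < c) (hρ : ∀ x ∈ Ω, c ≤ ρ x ∧ ρ x ≤ C)
    (p q : ℝ) (ζ : ℝ → ℝ) (hζnn : ∀ t, 0 ≤ ζ t)
    (η : ℝ → ℝ) (hηnn : ∀ t, 0 ≤ η t) (M : ℝ) (hηM : ∀ t, M < t → η t = 0)
    (ε : ℕ → ℝ) (hεpos : ∀ n, 0 < ε n) (hε0 : Tendsto ε atTop (nhds 0))
    (T : ℕ → EuclideanSpace ℝ (Fin d) → EuclideanSpace ℝ (Fin d))
    (ℓ : ℕ → ℝ) (hℓ : ∀ n, ∀ x ∈ Ω, ‖T n x - x‖ ≤ ℓ n)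
    (hℓε : Tendsto (fun n => ℓ n / ε n) atTop (nhds 0))
    (u : ℕ → EuclideanSpace ℝ (Fin d) → ℝ) :
    liminf (fun n => gmsEnergy d Ω p q (ε n) ζ η (T n) (u n) (fun x y => ρ x * ρ y)) atTop =
        liminf (fun n => gmsEnergy d Ω p q (ε n) ζ η (T n) (u n) (fun x y => ρ x ^ 2)) atTop ∧
      limsup (fun n => gmsEnergy d Ω p q (ε n) ζ η (T n) (u n) (fun x y => ρ x * ρ y)) atTop =
        limsup (fun n => gmsEnergy d Ω p q (ε n) ζ η (T n) (u n) (fun x y => ρ x ^ 2)) atTop := by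
  set A := fun n => gmsEnergy d Ω p q (ε n) ζ η (T n) (u n) (fun x y => ρ x * ρ y)
  set B := fun n => gmsEnergy d Ω p q (ε n) ζ η (T n) (u n) (fun x y => ρ x ^ 2)
  have hℓ0 : Tendsto ℓ atTop (𝓝 0) := by
    simpa using (hℓε.mul hε0).congr fun n => div_mul_cancel₀ _ (hεpos n).ne'
  have hcmp : ∀ K : ℝ≥0, 1 < K → ∀ᶠ n in atTop, A n ≤ K * B n ∧ B n ≤ K * A n := by
    intro K hK
    have hτ : 0 < ((K : ℝ) - 1) * c := mul_pos (sub_pos.2 (by exact_mod_cast hK)) hc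
    filter_upwards [hρL.eventually_dist_le_of_tendsto M
      (fun n x hx => (dist_eq_norm _ _).trans_le (hℓ n x hx)) hℓ0 hε0 hτ] with n hn
    have hosc : ∀ x ∈ Ω, ∀ y ∈ Ω, ‖T n x - T n y‖ ≤ M * ε n → |ρ x - ρ y| ≤ (K - 1) * c :=
      fun x hx y hy hT => by simpa [dist_eq_norm] using hn x hx y hy (by rwa [dist_eq_norm])
    exact ⟨gmsEnergy_le_mul_of_weight_le hΩm (hεpos n) hζnn hηnn hηM fun x hx y hy hT =>
        mul_le_mul_sq_of_abs_sub_le hc (hρ x hx).1 (hosc x hx y hy hT),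
      gmsEnergy_le_mul_of_weight_le hΩm (hεpos n) hζnn hηnn hηM fun x hx y hy hT =>
        sq_le_mul_mul_of_abs_sub_le hc (hρ x hx).1 (hρ y hy).1 (hosc x hx y hy hT)⟩
  have hAB K hK := (hcmp K hK).mono fun _ h => h.1
  have hBA K hK := (hcmp K hK).mono fun _ h => h.2
  exact ⟨le_antisymm (ENNReal.liminf_le_liminf_of_forall_eventually_le_mul hAB)
      (ENNReal.liminf_le_liminf_of_forall_eventually_le_mul hBA),
    le_antisymm (ENNReal.limsup_le_limsup_of_forall_eventually_le_mul hAB)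
      (ENNReal.limsup_le_limsup_of_forall_eventually_le_mul hBA)⟩

/-- Asymptotic equivalence of the transported energy `ḠMS_n` (weight `ρ(x)ρ(y)`) and the
auxiliary energy `GAMS_n` (weight `ρ(x)²`): along any sequence `u_n`, the liminfs and the
limsups coincide, as identities in `[0,∞]`. -/
theorem liminf_limsup_GMSbar_eq_GAMS (d : ℕ) (Ω : Set (EuclideanSpace ℝ (Fin d)))
    (hΩm : MeasurableSet Ω) (hΩb : Bornology.IsBounded Ω)
    (ρ : EuclideanSpace ℝ (Fin d) → ℝ) (L : ℝ≥0) (hρL : LipschitzOnWith L ρ Ω)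
    (c C : ℝ) (hc : 0 < c) (hρ : ∀ x ∈ Ω, c ≤ ρ x ∧ ρ x ≤ C)
    (p q : ℝ) (hp : 1 ≤ p) (hq0 : 0 ≤ q) (hqp : q < p)
    (ζ : ℝ → ℝ) (hζconc : ConcaveOn ℝ (Ici 0) ζ) (hζmono : MonotoneOn ζ (Ici 0))
    (hζ0 : ζ 0 = 0) (hζnn : ∀ t, 0 ≤ ζ t)
    (s : ℝ) (hζd : HasDerivWithinAt ζ s (Ici 0) 0)
    (Θ : ℝ) (hζΘ : Tendsto ζ atTop (nhds Θ))
    (η : ℝ → ℝ) (hηnn : ∀ t, 0 ≤ η t) (hηanti : AntitoneOn η (Ici 0))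
    (M : ℝ) (hM : 0 < M) (hηM : ∀ t, M < t → η t = 0)
    (ε : ℕ → ℝ) (hεpos : ∀ n, 0 < ε n) (hε0 : Tendsto ε atTop (nhds 0))
    (T : ℕ → EuclideanSpace ℝ (Fin d) → EuclideanSpace ℝ (Fin d))
    (hTm : ∀ n, Measurable (T n)) (hTmap : ∀ n, ∀ x ∈ Ω, T n x ∈ Ω)
    (ℓ : ℕ → ℝ) (hℓnn : ∀ n, 0 ≤ ℓ n) (hℓ : ∀ n, ∀ x ∈ Ω, ‖T n x - x‖ ≤ ℓ n)
    (hℓε : Tendsto (fun n => ℓ n / ε n) atTop (nhds 0))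
    (u : ℕ → EuclideanSpace ℝ (Fin d) → ℝ) (hu : ∀ n, Measurable fun x => u n (T n x)) :
    liminf (fun n => gmsEnergy d Ω p q (ε n) ζ η (T n) (u n) (fun x y => ρ x * ρ y)) atTop =
        liminf (fun n => gmsEnergy d Ω p q (ε n) ζ η (T n) (u n) (fun x y => ρ x ^ 2)) atTop ∧
      limsup (fun n => gmsEnergy d Ω p q (ε n) ζ η (T n) (u n) (fun x y => ρ x * ρ y)) atTop =
        limsup (fun n => gmsEnergy d Ω p q (ε n) ζ η (T n) (u n) (fun x y => ρ x ^ 2)) atTop :=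
  liminf_limsup_GMSbar_eq_GAMS_general d Ω hΩm ρ L hρL c C hc hρ p q ζ hζnn η hηnn M hηM ε hεpos hε0
    T ℓ hℓ hℓε u
end

section
/- Let Ω ⊂ ℝ^d be a bounded open set and ρ : Ω → ℝ a measurable function with 0 < c ≤ ρ(x) ≤ C < ∞. Let f : Ω → ℝ be bounded and measurable, and suppose there is a closed set K ⊂ ℝ^d with H^{d−1}(K) < ∞ such that f is continuous on Ω \ K. Let T_n : Ω → Ω be measurable maps with sup_{x∈Ω} |T_n(x) − x| → 0 as n → ∞. Then ∫_Ω |f(T_n(x)) − f(x)|² ρ(x) dx → 0 as n → ∞. -/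
open MeasureTheory Filter Topology
open scoped ENNReal

/-!
Since `H^{d-1}(K) < ∞`, the set `K` is Lebesgue-null. At every `x ∈ Ω \ K` the function `f` is
continuous (as `Ω \ K` is open) and `T n x → x`, so the integrand tends to `0` almost everywhere
on `Ω`. It is bounded by `(2B)² · max |c| |C|`, and `Ω` has finite measure, so dominated
convergence concludes.
-/

theorem MeasureTheory.Measure.addHaar_eq_zero_of_hausdorffMeasure_lt_top {E : Type*}
    [NormedAddCommGroup E] [NormedSpace ℝ E] [FiniteDimensional ℝ E] [MeasurableSpace E] [BorelSpace E]
    (μ : Measure E) [μ.IsAddHaarMeasure] {r : ℝ} (hr : r < Module.finrank ℝ E) {s : Set E}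
    (hs : μH[r] s < ∞) : μ s = 0 := by
  have hμH : μH[(Module.finrank ℝ E : ℝ)] s = 0 :=
    (Measure.hausdorffMeasure_zero_or_top hr s).resolve_right hs.ne
  exact Measure.absolutelyContinuous_isAddHaarMeasure μ _ hμH

theorem tendsto_of_norm_sub_le {E : Type*} [SeminormedAddCommGroup E] {ι : Type*} {l : Filter ι}
    {u : ι → E} {a : E} {δ : ι → ℝ} (hδ : Tendsto δ l (𝓝 0)) (hu : ∀ i, ‖u i - a‖ ≤ δ i) :
    Tendsto u l (𝓝 a) :=
  tendsto_iff_norm_sub_tendsto_zero.2 (squeeze_zero (fun _ => norm_nonneg _) hu hδ)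

theorem ContinuousOn.ae_tendsto_comp_of_measure_zero {X Y ι : Type*} [TopologicalSpace X]
    [MeasurableSpace X] [OpensMeasurableSpace X] [TopologicalSpace Y] {μ : Measure X}
    {l : Filter ι} {f : X → Y} {Ω K : Set X} (hΩ : IsOpen Ω) (hK : IsClosed K) (hK0 : μ K = 0)
    (hf : ContinuousOn f (Ω \ K)) {T : ι → X → X}
    (hT : ∀ x ∈ Ω, Tendsto (fun i => T i x) l (𝓝 x)) :
    ∀ᵐ x ∂μ.restrict Ω, Tendsto (fun i => f (T i x)) l (𝓝 (f x)) := by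
  filter_upwards [ae_restrict_mem hΩ.measurableSet,
    ae_restrict_of_ae (measure_eq_zero_iff_ae_notMem.1 hK0)] with x hxΩ hxK
  exact (hf.continuousAt ((hΩ.sdiff hK).mem_nhds ⟨hxΩ, hxK⟩)).tendsto.comp (hT x hxΩ)

theorem fidelity_term_tendsto_zero_general (d : ℕ)
    (Ω : Set (EuclideanSpace ℝ (Fin d))) (hΩo : IsOpen Ω) (hΩb : Bornology.IsBounded Ω)
    (c C : ℝ)
    (ρ : EuclideanSpace ℝ (Fin d) → ℝ) (hρm : Measurable ρ)
    (hρ : ∀ x ∈ Ω, c ≤ ρ x ∧ ρ x ≤ C)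
    (f : EuclideanSpace ℝ (Fin d) → ℝ) (hfm : Measurable f)
    (B : ℝ) (hfB : ∀ x ∈ Ω, |f x| ≤ B)
    (K : Set (EuclideanSpace ℝ (Fin d))) (hK : IsClosed K) (hKH : μH[(d : ℝ) - 1] K < ⊤)
    (hfc : ContinuousOn f (Ω \ K))
    (T : ℕ → EuclideanSpace ℝ (Fin d) → EuclideanSpace ℝ (Fin d))
    (hTm : ∀ n, Measurable (T n)) (hTmap : ∀ n, ∀ x ∈ Ω, T n x ∈ Ω)
    (δ : ℕ → ℝ) (hδ : Tendsto δ atTop (nhds 0))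
    (hTδ : ∀ n, ∀ x ∈ Ω, ‖T n x - x‖ ≤ δ n) :
    Tendsto (fun n => ∫ x in Ω, |f (T n x) - f x| ^ 2 * ρ x) atTop (nhds 0) := by
  have hK0 : volume K = 0 :=
    Measure.addHaar_eq_zero_of_hausdorffMeasure_lt_top volume (by simp) hKH
  have hlim : ∀ᵐ x ∂volume.restrict Ω,
      Tendsto (fun n => |f (T n x) - f x| ^ 2 * ρ x) atTop (𝓝 0) := by
    filter_upwards [hfc.ae_tendsto_comp_of_measure_zero hΩo hK hK0
      fun x hx => tendsto_of_norm_sub_le hδ fun n => hTδ n x hx] with x hx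
    simpa using (((hx.sub_const (f x)).abs.pow 2).mul_const (ρ x))
  have hbound : ∀ n, ∀ᵐ x ∂volume.restrict Ω,
      ‖|f (T n x) - f x| ^ 2 * ρ x‖ ≤ (B + B) ^ 2 * max |c| |C| := by
    intro n
    filter_upwards [ae_restrict_mem hΩo.measurableSet] with x hx
    rw [Real.norm_eq_abs, abs_mul, abs_pow, abs_abs]
    gcongr
    · exact (abs_sub _ _).trans (add_le_add (hfB _ (hTmap n x hx)) (hfB x hx))
    · exact abs_le_max_abs_abs (hρ x hx).1 (hρ x hx).2
  simpa using tendsto_integral_of_dominated_convergence _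
    (fun n => by fun_prop) (integrableOn_const hΩb.measure_lt_top.ne) hbound hlim

/-- Convergence of the fidelity term: if `f` is bounded, measurable and continuous off a closed
set `K` with `H^{d-1}(K) < ∞`, `ρ` is measurable with `0 < c ≤ ρ ≤ C` on a bounded open `Ω`, and
`T_n : Ω → Ω` are measurable maps with `sup_Ω |T_n - id| → 0`, then
`∫_Ω |f(T_n x) - f(x)|² ρ(x) dx → 0`. -/
theorem fidelity_term_tendsto_zero (d : ℕ)
    (Ω : Set (EuclideanSpace ℝ (Fin d))) (hΩo : IsOpen Ω) (hΩb : Bornology.IsBounded Ω)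
    (c C : ℝ) (hc : 0 < c)
    (ρ : EuclideanSpace ℝ (Fin d) → ℝ) (hρm : Measurable ρ)
    (hρ : ∀ x ∈ Ω, c ≤ ρ x ∧ ρ x ≤ C)
    (f : EuclideanSpace ℝ (Fin d) → ℝ) (hfm : Measurable f)
    (B : ℝ) (hfB : ∀ x ∈ Ω, |f x| ≤ B)
    (K : Set (EuclideanSpace ℝ (Fin d))) (hK : IsClosed K) (hKH : μH[(d : ℝ) - 1] K < ⊤)
    (hfc : ContinuousOn f (Ω \ K))
    (T : ℕ → EuclideanSpace ℝ (Fin d) → EuclideanSpace ℝ (Fin d))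
    (hTm : ∀ n, Measurable (T n)) (hTmap : ∀ n, ∀ x ∈ Ω, T n x ∈ Ω)
    (δ : ℕ → ℝ) (hδ : Tendsto δ atTop (nhds 0))
    (hTδ : ∀ n, ∀ x ∈ Ω, ‖T n x - x‖ ≤ δ n) :
    Tendsto (fun n => ∫ x in Ω, |f (T n x) - f x| ^ 2 * ρ x) atTop (nhds 0) :=
  fidelity_term_tendsto_zero_general d Ω hΩo hΩb c C ρ hρm hρ f hfm B hfB K hK hKH hfc T hTm hTmap δ
    hδ hTδ
end

section
/- Let μ be a compactly supported Borel probability measure on ℝ^d, let p ∈ [1,∞), and for each n let μ̃_n be a Borel probability measure on ℝ^d absolutely continuous with respect to μ whose density ρ_n = dμ̃_n/dμ converges to 1 uniformly on the support of μ. Let f ∈ L^p(μ) and f_n ∈ L^p(μ) with ∫ |f_n − f|^p dμ → 0 as n → ∞. Then there exist Borel probability measures π_n on ℝ^d × ℝ^d whose first marginal is μ (i.e. the pushforward of π_n under (x,y) ↦ x is μ) and whose second marginal is μ̃_n, such that ∫_{ℝ^d × ℝ^d} ( |x − y|^p + |f(x) − f_n(y)|^p ) dπ_n(x,y) → 0 as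 n → ∞. -/
/-!
With `η_n` the supremum of `|ρ_n - 1|` over the support of `μ`, uniform convergence gives
`η_n → 0`, and `(1 - η_n) μ ≤ μ̃_n ≤ (1 + η_n) μ`. The coupling `π_n` leaves the common part
`(1 - η_n) μ` on the diagonal, where the cost is `|f - f_n|^p`, and couples the remaining mass
of `μ̃_n`, which is at most `η_n` and has density at most `2 η_n` with respect to `μ`,
independently with `μ`. On the compact support the cost of that product part is at most
`diam(K)^p + 2^(p-1) (|f x|^p + |f_n y|^p)`, so it contributes `O(η_n)` since `f_n` stays
bounded in `L^p(μ)`.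
-/

open MeasureTheory Filter
open scoped ENNReal

/-- The (topological) support of a Borel measure: the set of points all of whose open
neighborhoods have positive measure. -/
def measSupport {E : Type*} [TopologicalSpace E] [MeasurableSpace E]
    (μ : Measure E) : Set E :=
  {x | ∀ U : Set E, IsOpen U → x ∈ U → μ U ≠ 0}

open Set Topology

lemma measSupport_eq_support {X : Type*} [TopologicalSpace X] [MeasurableSpace X]
    (μ : Measure X) : measSupport μ = μ.support := by
  ext x
  simp only [measSupport, Measure.support_eq_forall_isOpen, pos_iff_ne_zero, mem_ofPred_eq]
  exact forall_congr' fun U => forall_comm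

lemma ae_mem_measSupport {X : Type*} [TopologicalSpace X] [HereditarilyLindelofSpace X]
    [MeasurableSpace X] (μ : Measure X) : ∀ᵐ x ∂μ, x ∈ measSupport μ := by
  rw [measSupport_eq_support]
  exact Measure.support_mem_ae

lemma tendsto_iSup_edist_of_tendstoUniformlyOn {ι α β : Type*} [PseudoEMetricSpace β]
    {l : Filter ι} {F : ι → α → β} {f : α → β} {s : Set α} (h : TendstoUniformlyOn F f l s) :
    Tendsto (fun i => ⨆ x ∈ s, edist (F i x) (f x)) l (𝓝 0) :=
  ENNReal.tendsto_nhds_zero.2 fun ε hε =>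
    (EMetric.tendstoUniformlyOn_iff.1 h ε hε).mono fun _ hi =>
      iSup₂_le fun x hx => (edist_comm _ _).trans_le (hi x hx).le

lemma ofReal_le_one_add_edist_one (r : ℝ) : ENNReal.ofReal r ≤ 1 + edist r 1 := by
  rw [edist_dist, Real.dist_eq, ← ENNReal.ofReal_one]
  exact (ENNReal.ofReal_le_ofReal (by linarith [le_abs_self (r - 1)])).trans
    ENNReal.ofReal_add_le

lemma one_sub_edist_one_le_ofReal (r : ℝ) : 1 - edist r 1 ≤ ENNReal.ofReal r := by
  rw [tsub_le_iff_right, edist_dist, Real.dist_eq, ← ENNReal.ofReal_one]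
  exact (ENNReal.ofReal_le_ofReal (by linarith [neg_abs_le (r - 1)])).trans
    ENNReal.ofReal_add_le

section Density

variable {α : Type*} [MeasurableSpace α] {μ : Measure α} {ρ : α → ℝ} {η : ℝ≥0∞}

lemma one_sub_smul_le_withDensity_ofReal (hη : ∀ᵐ x ∂μ, edist (ρ x) 1 ≤ η) :
    (1 - η) • μ ≤ μ.withDensity fun x => ENNReal.ofReal (ρ x) := by
  rw [← withDensity_const]
  refine withDensity_mono (hη.mono fun x hx => ?_)
  exact (tsub_le_tsub_left hx 1).trans (one_sub_edist_one_le_ofReal (ρ x))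

lemma withDensity_ofReal_le_one_add_smul (hη : ∀ᵐ x ∂μ, edist (ρ x) 1 ≤ η) :
    (μ.withDensity fun x => ENNReal.ofReal (ρ x)) ≤ (1 + η) • μ := by
  rw [← withDensity_const]
  refine withDensity_mono (hη.mono fun x hx => ?_)
  exact (ofReal_le_one_add_edist_one (ρ x)).trans (add_le_add_right hx 1)

end Density

section Coupling

variable {α : Type*} [MeasurableSpace α] {μ ν : Measure α} {t : ℝ≥0∞}

noncomputable def diagProdCoupling (μ ν : Measure α) (t : ℝ≥0∞) : Measure (α × α) :=
  t • μ.map (fun x => (x, x)) + μ.prod (ν - t • μ)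

lemma measure_univ_sub_smul [IsProbabilityMeasure μ] [IsProbabilityMeasure ν]
    (h : t • μ ≤ ν) : (ν - t • μ) univ = 1 - t := by
  have ht : t ≠ ∞ := by
    refine ne_top_of_le_ne_top ENNReal.one_ne_top ?_
    simpa using h univ
  have := μ.smul_finite ht
  rw [Measure.sub_apply MeasurableSet.univ h]
  simp

lemma map_fst_diagProdCoupling [IsProbabilityMeasure μ] [IsProbabilityMeasure ν]
    (h : t • μ ≤ ν) : (diagProdCoupling μ ν t).map Prod.fst = μ := by
  have ht : t ≤ 1 := by simpa using h univ
  rw [diagProdCoupling, Measure.map_add _ _ measurable_fst, Measure.map_smul,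
    Measure.map_map measurable_fst (by fun_prop), Function.comp_def, Measure.map_id',
    Measure.map_fst_prod, measure_univ_sub_smul h, ← add_smul, add_tsub_cancel_of_le ht, one_smul]

lemma map_snd_diagProdCoupling [IsProbabilityMeasure μ] [IsFiniteMeasure ν]
    (h : t • μ ≤ ν) : (diagProdCoupling μ ν t).map Prod.snd = ν := by
  have ht : t ≠ ∞ := by
    refine ne_top_of_le_ne_top (measure_ne_top ν univ) ?_
    simpa using h univ
  have := μ.smul_finite ht
  rw [diagProdCoupling, Measure.map_add _ _ measurable_snd, Measure.map_smul,
    Measure.map_map measurable_snd (by fun_prop), Function.comp_def, Measure.map_id',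
    Measure.map_snd_prod, measure_univ, one_smul, add_comm]
  exact Measure.sub_add_cancel_of_le h

lemma lintegral_diagProdCoupling_le (c : α × α → ℝ≥0∞) :
    ∫⁻ z, c z ∂diagProdCoupling μ ν t ≤
      t * ∫⁻ x, c (x, x) ∂μ + ∫⁻ x, ∫⁻ y, c (x, y) ∂(ν - t • μ) ∂μ := by
  rw [diagProdCoupling, lintegral_add_measure, lintegral_smul_measure, smul_eq_mul]
  gcongr
  · exact lintegral_map_le _ _
  · exact lintegral_prod_le _

end Coupling

section Cost

variable {α F : Type*} [NormedAddCommGroup F] {p : ℝ}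

lemma lintegral_enorm_rpow_le [MeasurableSpace α] {μ : Measure α} {f : α → F} (hp : 1 ≤ p)
    (hf : AEStronglyMeasurable f μ) (g : α → F) :
    ∫⁻ x, ‖g x‖ₑ ^ p ∂μ ≤
      2 ^ (p - 1) * (∫⁻ x, ‖g x - f x‖ₑ ^ p ∂μ + ∫⁻ x, ‖f x‖ₑ ^ p ∂μ) := by
  rw [← lintegral_add_right' _ (hf.enorm.pow_const p),
    ← lintegral_const_mul' _ _ (by finiteness)]
  refine lintegral_mono fun x => ?_
  calc ‖g x‖ₑ ^ p = ‖(g x - f x) + f x‖ₑ ^ p := by rw [sub_add_cancel]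
    _ ≤ (‖g x - f x‖ₑ + ‖f x‖ₑ) ^ p :=
      ENNReal.rpow_le_rpow (enorm_add_le _ _) (zero_le_one.trans hp)
    _ ≤ _ := ENNReal.rpow_add_le_mul_rpow_add_rpow _ _ hp

variable [PseudoEMetricSpace α] {f g : α → F}

noncomputable def tlpCost (p : ℝ) (f g : α → F) (z : α × α) : ℝ≥0∞ :=
  edist z.1 z.2 ^ p + ‖f z.1 - g z.2‖ₑ ^ p

lemma tlpCost_diag (hp : 0 < p) (x : α) : tlpCost p f g (x, x) = ‖f x - g x‖ₑ ^ p := by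
  simp [tlpCost, ENNReal.zero_rpow_of_pos hp]

lemma tlpCost_le_of_mem {K : Set α} (hp : 1 ≤ p) {x y : α} (hx : x ∈ K) (hy : y ∈ K) :
    tlpCost p f g (x, y) ≤ Metric.ediam K ^ p + 2 ^ (p - 1) * (‖f x‖ₑ ^ p + ‖g y‖ₑ ^ p) := by
  have hp0 : 0 ≤ p := zero_le_one.trans hp
  refine add_le_add (ENNReal.rpow_le_rpow (Metric.edist_le_ediam_of_mem hx hy) hp0) ?_
  exact (ENNReal.rpow_le_rpow enorm_sub_le hp0).trans
    (ENNReal.rpow_add_le_mul_rpow_add_rpow _ _ hp)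

variable [MeasurableSpace α]

lemma lintegral_lintegral_tlpCost_le {μ γ : Measure α} [IsProbabilityMeasure μ]
    [IsFiniteMeasure γ] {K : Set α} (hp : 1 ≤ p) (hK : ∀ᵐ x ∂μ, x ∈ K) (hγ : γ ≪ μ) :
    ∫⁻ x, ∫⁻ y, tlpCost p f g (x, y) ∂γ ∂μ ≤
      γ univ * (Metric.ediam K ^ p + 2 ^ (p - 1) * ∫⁻ x, ‖f x‖ₑ ^ p ∂μ) +
        2 ^ (p - 1) * ∫⁻ y, ‖g y‖ₑ ^ p ∂γ := by
  set A := Metric.ediam K ^ p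
  set B : ℝ≥0∞ := 2 ^ (p - 1)
  have hB : B ≠ ∞ := by finiteness
  calc ∫⁻ x, ∫⁻ y, tlpCost p f g (x, y) ∂γ ∂μ
      ≤ ∫⁻ x, ∫⁻ y, (A + B * ‖f x‖ₑ ^ p) + B * ‖g y‖ₑ ^ p ∂γ ∂μ := by
        refine lintegral_mono_ae (hK.mono fun x hx => lintegral_mono_ae ?_)
        filter_upwards [hγ.ae_le hK] with y hy
        exact (tlpCost_le_of_mem hp hx hy).trans_eq (by ring)
    _ = ∫⁻ x, (A + B * ‖f x‖ₑ ^ p) * γ univ + B * ∫⁻ y, ‖g y‖ₑ ^ p ∂γ ∂μ := by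
        refine lintegral_congr fun x => ?_
        rw [lintegral_add_left measurable_const, lintegral_const, lintegral_const_mul' _ _ hB]
    _ = γ univ * (A + B * ∫⁻ x, ‖f x‖ₑ ^ p ∂μ) + B * ∫⁻ y, ‖g y‖ₑ ^ p ∂γ := by
        rw [lintegral_add_right _ measurable_const,
          lintegral_mul_const' _ _ (measure_ne_top γ univ), lintegral_add_left measurable_const, lintegral_const, lintegral_const_mul' _ _ hB,
          lintegral_const, measure_univ]
        ring

lemma lintegral_tlpCost_diagProdCoupling_le {μ ν : Measure α} [IsProbabilityMeasure μ]
    [IsProbabilityMeasure ν] {K : Set α} {η : ℝ≥0∞} (hp : 1 ≤ p) (hK : ∀ᵐ x ∂μ, x ∈ K)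
    (hf : AEStronglyMeasurable f μ) (hlow : (1 - η) • μ ≤ ν) (hup : ν ≤ (1 + η) • μ) :
    ∫⁻ z, tlpCost p f g z ∂diagProdCoupling μ ν (1 - η) ≤
      ∫⁻ x, ‖g x - f x‖ₑ ^ p ∂μ + η * (Metric.ediam K ^ p + 2 ^ (p - 1) *
        (∫⁻ x, ‖f x‖ₑ ^ p ∂μ + 2 * (2 ^ (p - 1) *
          (∫⁻ x, ‖g x - f x‖ₑ ^ p ∂μ + ∫⁻ x, ‖f x‖ₑ ^ p ∂μ)))) := by
  set γ := ν - (1 - η) • μ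
  have hγ_univ : γ univ ≤ η := by
    rw [measure_univ_sub_smul hlow, tsub_le_iff_right]
    exact le_add_tsub
  have hγ_le : γ ≤ (2 * η) • μ := by
    refine Measure.sub_le_of_le_add (hup.trans ?_)
    rw [← add_smul]
    refine IsOrderedSMul.smul_le_smul_right _ _ ?_ μ
    calc 1 + η ≤ (η + (1 - η)) + η := by gcongr; exact le_add_tsub
      _ = 2 * η + (1 - η) := by ring
  have hγ_ac : γ ≪ μ := hγ_le.absolutelyContinuous.trans Measure.smul_absolutelyContinuous
  have hg : ∫⁻ y, ‖g y‖ₑ ^ p ∂γ ≤ 2 * η * ∫⁻ y, ‖g y‖ₑ ^ p ∂μ := by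
    rw [← smul_eq_mul, ← lintegral_smul_measure]
    exact lintegral_mono' hγ_le le_rfl
  calc ∫⁻ z, tlpCost p f g z ∂diagProdCoupling μ ν (1 - η)
      ≤ (1 - η) * ∫⁻ x, tlpCost p f g (x, x) ∂μ + ∫⁻ x, ∫⁻ y, tlpCost p f g (x, y) ∂γ ∂μ :=
        lintegral_diagProdCoupling_le _
    _ ≤ ∫⁻ x, ‖g x - f x‖ₑ ^ p ∂μ + (γ univ * (Metric.ediam K ^ p + 2 ^ (p - 1) *
          ∫⁻ x, ‖f x‖ₑ ^ p ∂μ) + 2 ^ (p - 1) * ∫⁻ y, ‖g y‖ₑ ^ p ∂γ) := by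
        refine add_le_add ?_ (lintegral_lintegral_tlpCost_le hp hK hγ_ac)
        simp_rw [tlpCost_diag (zero_lt_one.trans_le hp), enorm_sub_rev (f _)]
        exact mul_le_of_le_one_left' tsub_le_self
    _ ≤ _ := by
        grw [hγ_univ, hg, lintegral_enorm_rpow_le hp hf g]
        apply le_of_eq
        ring

end Cost

lemma ofReal_abs_rpow (a : ℝ) {p : ℝ} (hp : 0 ≤ p) :
    ENNReal.ofReal (|a| ^ p) = ‖a‖ₑ ^ p := by
  rw [Real.enorm_eq_ofReal_abs, ENNReal.ofReal_rpow_of_nonneg (abs_nonneg a) hp]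

lemma ofReal_norm_sub_rpow_add_abs_sub_rpow {E : Type*} [SeminormedAddCommGroup E] {p : ℝ}
    (hp : 0 ≤ p) (f g : E → ℝ) (z : E × E) :
    ENNReal.ofReal (‖z.1 - z.2‖ ^ p + |f z.1 - g z.2| ^ p) = tlpCost p f g z := by
  rw [tlpCost, ENNReal.ofReal_add (by positivity) (by positivity), ofReal_abs_rpow _ hp,
    edist_dist, dist_eq_norm, ENNReal.ofReal_rpow_of_nonneg (norm_nonneg _) hp]

theorem tlp_convergence_of_uniform_density_general (d : ℕ) (p : ℝ) (hp : 1 ≤ p)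
    (μ : Measure (EuclideanSpace ℝ (Fin d))) [IsProbabilityMeasure μ]
    (Kc : Set (EuclideanSpace ℝ (Fin d))) (hKc : IsCompact Kc) (hμKc : μ Kcᶜ = 0)
    (ρn : ℕ → EuclideanSpace ℝ (Fin d) → ℝ)
    (μt : ℕ → Measure (EuclideanSpace ℝ (Fin d)))
    (hμt : ∀ n, μt n = μ.withDensity fun x => ENNReal.ofReal (ρn n x))
    (hμtprob : ∀ n, IsProbabilityMeasure (μt n))
    (hunif : TendstoUniformlyOn (fun n x => ρn n x) (fun _ => 1) atTop (measSupport μ))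
    (f : EuclideanSpace ℝ (Fin d) → ℝ) (hf : MemLp f (ENNReal.ofReal p) μ)
    (fn : ℕ → EuclideanSpace ℝ (Fin d) → ℝ)
    (hconv : Tendsto (fun n => ∫⁻ x, ENNReal.ofReal (|fn n x - f x| ^ p) ∂μ) atTop (nhds 0)) :
    ∃ π : ℕ → Measure (EuclideanSpace ℝ (Fin d) × EuclideanSpace ℝ (Fin d)),
      (∀ n, (π n).map Prod.fst = μ) ∧ (∀ n, (π n).map Prod.snd = μt n) ∧
        Tendsto
          (fun n =>
            ∫⁻ pr, ENNReal.ofReal (‖pr.1 - pr.2‖ ^ p + |f pr.1 - fn n pr.2| ^ p) ∂(π n))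
          atTop (nhds 0) := by
  have hp0 : 0 < p := zero_lt_one.trans_le hp
  set η : ℕ → ℝ≥0∞ := fun n => ⨆ x ∈ measSupport μ, edist (ρn n x) 1
  have hη : ∀ n, ∀ᵐ x ∂μ, edist (ρn n x) 1 ≤ η n := fun n =>
    (ae_mem_measSupport μ).mono fun x hx => le_iSup₂ (f := fun x _ => edist (ρn n x) 1) x hx
  have hlow n : (1 - η n) • μ ≤ μt n := hμt n ▸ one_sub_smul_le_withDensity_ofReal (hη n)
  have hup n : μt n ≤ (1 + η n) • μ := hμt n ▸ withDensity_ofReal_le_one_add_smul (hη n)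
  refine ⟨fun n => diagProdCoupling μ (μt n) (1 - η n), fun n => map_fst_diagProdCoupling (hlow n),
    fun n => map_snd_diagProdCoupling (hlow n), ?_⟩
  set D : ℕ → ℝ≥0∞ := fun n => ∫⁻ x, ‖fn n x - f x‖ₑ ^ p ∂μ
  set F := ∫⁻ x, ‖f x‖ₑ ^ p ∂μ
  set M := Metric.ediam Kc ^ p + 2 ^ (p - 1) * (F + 2 * (2 ^ (p - 1) * (1 + F)))
  have hD : Tendsto D atTop (𝓝 0) := by simpa only [ofReal_abs_rpow _ hp0.le] using hconv
  have hF : F ≠ ∞ := by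
    have := lintegral_rpow_enorm_lt_top_of_eLpNorm_lt_top (by simpa using hp0)
      ENNReal.ofReal_ne_top hf.2
    simpa [ENNReal.toReal_ofReal hp0.le] using this.ne
  have hM : M ≠ ∞ := by
    have := hKc.isBounded.ediam_ne_top
    finiteness
  have hbound : ∀ᶠ n in atTop, ∫⁻ z, ENNReal.ofReal (‖z.1 - z.2‖ ^ p + |f z.1 - fn n z.2| ^ p)
      ∂diagProdCoupling μ (μt n) (1 - η n) ≤ D n + η n * M := by
    filter_upwards [hD.eventually_le_const zero_lt_one] with n hn
    simp_rw [ofReal_norm_sub_rpow_add_abs_sub_rpow hp0.le]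
    have := hμtprob n
    exact (lintegral_tlpCost_diagProdCoupling_le hp (mem_ae_iff.2 hμKc) hf.1 (hlow n) (hup n)).trans
      (by simp only [M]; gcongr)
  refine tendsto_of_tendsto_of_tendsto_of_le_of_le' tendsto_const_nhds ?_
    (Eventually.of_forall fun _ => zero_le) hbound
  simpa using hD.add (ENNReal.Tendsto.mul_const (tendsto_iSup_edist_of_tendstoUniformlyOn hunif)
    (Or.inr hM))

/-- If `μ̃_n = ρ_n μ` with `ρ_n → 1` uniformly on the support of the compactly supported
probability measure `μ`, and `f_n → f` in `L^p(μ)`, then `(μ̃_n, f_n) → (μ, f)` in `TL^p`: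
there are couplings `π_n` of `μ` and `μ̃_n` with
`∫ |x-y|^p + |f(x) - f_n(y)|^p dπ_n → 0`. -/
theorem tlp_convergence_of_uniform_density (d : ℕ) (p : ℝ) (hp : 1 ≤ p)
    (μ : Measure (EuclideanSpace ℝ (Fin d))) [IsProbabilityMeasure μ]
    (Kc : Set (EuclideanSpace ℝ (Fin d))) (hKc : IsCompact Kc) (hμKc : μ Kcᶜ = 0)
    (ρn : ℕ → EuclideanSpace ℝ (Fin d) → ℝ) (hρnn : ∀ n x, 0 ≤ ρn n x)
    (μt : ℕ → Measure (EuclideanSpace ℝ (Fin d)))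
    (hμt : ∀ n, μt n = μ.withDensity fun x => ENNReal.ofReal (ρn n x))
    (hμtprob : ∀ n, IsProbabilityMeasure (μt n))
    (hunif : TendstoUniformlyOn (fun n x => ρn n x) (fun _ => 1) atTop (measSupport μ))
    (f : EuclideanSpace ℝ (Fin d) → ℝ) (hf : MemLp f (ENNReal.ofReal p) μ)
    (fn : ℕ → EuclideanSpace ℝ (Fin d) → ℝ) (hfn : ∀ n, MemLp (fn n) (ENNReal.ofReal p) μ)
    (hconv : Tendsto (fun n => ∫⁻ x, ENNReal.ofReal (|fn n x - f x| ^ p) ∂μ) atTop (nhds 0)) :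
    ∃ π : ℕ → Measure (EuclideanSpace ℝ (Fin d) × EuclideanSpace ℝ (Fin d)),
      (∀ n, (π n).map Prod.fst = μ) ∧ (∀ n, (π n).map Prod.snd = μt n) ∧
        Tendsto
          (fun n =>
            ∫⁻ pr, ENNReal.ofReal (‖pr.1 - pr.2‖ ^ p + |f pr.1 - fn n pr.2| ^ p) ∂(π n))
          atTop (nhds 0) :=
  tlp_convergence_of_uniform_density_general d p hp μ Kc hKc hμKc ρn μt hμt hμtprob hunif f hf fn
    hconv
end

section
/- Let d ≥ 1 and let μ be a Borel probability measure on [0,1)^d with density ρ satisfying 0 < c ≤ ρ(x) ≤ C < ∞. Let (X_i)_{i∈ℕ} be i.i.d. random points with law μ and μ_n := (1/n) Σ_{i=1}^n δ_{X_i}. Let (b_n) and (c_n) be sequences of positive numbers with b_n → ∞, c_n → ∞, c_n²/b_n → ∞, such that for each n the number m_n := n/(b_n log n) is the d-th power of a positive integer, and let {K_j^n : 1 ≤ j ≤ m_n} be the partition of [0,1)^d into m_n congruent half-open cubes of side length δ_n := (b_n log n / n)^{1/d}. Then, almost surely, for all sufficiently large n and all 1 ≤ j ≤ m_n, |μ_n(K_j^n)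 − μ(K_j^n)| < c_n log n / n. -/
open MeasureTheory Filter
open scoped ENNReal

/-- The half-open cube of the partition of `[0,1)^d` into `k^d` congruent cubes of side `1/k`,
indexed by `v : Fin d → ℕ` (with `v i < k`). -/
def partitionCube (d k : ℕ) (v : Fin d → ℕ) : Set (EuclideanSpace ℝ (Fin d)) :=
  {x | ∀ i, x i ∈ Set.Ico ((v i : ℝ) / k) (((v i : ℝ) + 1) / k)}

/-!
Fix a cube `K` of the `n`-th partition and put `p = μ(K) ≤ C bₙ log n / n`. The count `n μₙ(K)`
is a sum of `n` independent Bernoulli(`p`) variables, and the centred Bernoulli moment generating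
function is at most `exp (p u²)` for `|u| ≤ 1`; the Chernoff bound at `u = t / (2p + t)` then
gives Bernstein's inequality `P(|μₙ(K) - p| ≥ t) ≤ 2 exp (-n t² / (4p + 2t))`. For
`t = cₙ log n / n` the exponent is at least `cₙ² log n / (4 C bₙ + 2 cₙ) ≥ 3 log n` as soon as
`cₙ²/bₙ` and `cₙ` are large, so each of the `mₙ ≤ n` cubes is exceptional with probability at
most `2 n⁻³`, some cube with probability at most `2 n⁻²`, and Borel–Cantelli concludes.
-/

open ProbabilityTheory Real

lemma exp_le_one_add_add_sq {x : ℝ} (hx : |x| ≤ 1) : exp x ≤ 1 + x + x ^ 2 := by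
  have h := abs_le.1 (Real.exp_bound hx (n := 2) two_pos)
  norm_num [Finset.sum_range_succ, Nat.factorial] at h
  nlinarith [sq_abs x, sq_nonneg x]

section IndicatorMGF

variable {α : Type*} [MeasurableSpace α] {μ : Measure α} [IsProbabilityMeasure μ] {K : Set α}

lemma mgf_indicator_sub_measureReal (hK : MeasurableSet K) (u : ℝ) :
    mgf (fun x => K.indicator 1 x - μ.real K) μ u
      = exp (-u * μ.real K) * (1 + μ.real K * (exp u - 1)) := by
  have hpointwise : ∀ x, exp (u * (K.indicator 1 x - μ.real K))
      = exp (-u * μ.real K) * (1 + (exp u - 1) * K.indicator 1 x) := by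
    intro x
    by_cases hx : x ∈ K
    · rw [Set.indicator_of_mem hx, Pi.one_apply, mul_one, add_sub_cancel, ← exp_add]
      ring_nf
    · simp [hx]
  simp only [mgf, hpointwise, integral_const_mul]
  rw [integral_add (integrable_const 1) ((integrable_const 1).indicator hK |>.const_mul _),
    integral_const_mul, integral_indicator_one hK, integral_const, probReal_univ, smul_eq_mul]
  ring

lemma mgf_indicator_sub_measureReal_le (hK : MeasurableSet K) {u : ℝ} (hu : |u| ≤ 1) :
    mgf (fun x => K.indicator 1 x - μ.real K) μ u ≤ exp (μ.real K * u ^ 2) := by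
  set p := μ.real K
  rw [mgf_indicator_sub_measureReal hK u]
  calc exp (-u * p) * (1 + p * (exp u - 1))
      ≤ exp (-u * p) * exp (p * (exp u - 1)) := by
        gcongr
        linarith [add_one_le_exp (p * (exp u - 1))]
    _ = exp (p * (exp u - 1 - u)) := by rw [← exp_add]; ring_nf
    _ ≤ exp (p * u ^ 2) := by
        gcongr
        linarith [exp_le_one_add_add_sq hu]

lemma abs_indicator_sub_measureReal_le_one (x : α) : |K.indicator 1 x - μ.real K| ≤ 1 := by
  have h0 : 0 ≤ μ.real K := measureReal_nonneg
  have h1 : μ.real K ≤ 1 := measureReal_le_one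
  by_cases hx : x ∈ K
  · rw [Set.indicator_of_mem hx, Pi.one_apply, abs_le]; constructor <;> linarith
  · rw [Set.indicator_of_notMem hx, abs_le]; constructor <;> linarith

end IndicatorMGF

section Chernoff

variable {Ω : Type*} [MeasurableSpace Ω] {P : Measure Ω} [IsFiniteMeasure P] {S : Ω → ℝ} {v s : ℝ}

lemma measureReal_ge_le_of_mgf_le (hint : ∀ u, Integrable (fun ω => exp (u * S ω)) P)
    (hmgf : ∀ u, |u| ≤ 1 → mgf S P u ≤ exp (v * u ^ 2)) (hv : 0 ≤ v) (hs : 0 < s) :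
    P.real {ω | s ≤ S ω} ≤ exp (-(s ^ 2 / (4 * v + 2 * s))) := by
  -- interpolates between the Gaussian optimum `s / (2v)` and the cap `1`
  set u := s / (2 * v + s)
  have hu0 : 0 ≤ u := by positivity
  have hu1 : |u| ≤ 1 := by
    rw [abs_of_nonneg hu0, div_le_one (by positivity)]
    linarith
  have hexponent : -u * s + v * u ^ 2 ≤ -(s ^ 2 / (4 * v + 2 * s)) := by
    have hden : 0 < 2 * v + s := by positivity
    rw [show 4 * v + 2 * s = 2 * (2 * v + s) by ring]
    simp only [u]
    rw [div_pow, ← sub_nonneg]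
    field_simp
    nlinarith [hs.le, hv]
  calc P.real {ω | s ≤ S ω} ≤ exp (-u * s) * mgf S P u := measure_ge_le_exp_mul_mgf s hu0 (hint u)
    _ ≤ exp (-u * s) * exp (v * u ^ 2) := by gcongr; exact hmgf u hu1
    _ ≤ exp (-(s ^ 2 / (4 * v + 2 * s))) := by rw [← exp_add]; exact exp_le_exp.2 hexponent

lemma measureReal_le_abs_le_of_mgf_le (hint : ∀ u, Integrable (fun ω => exp (u * S ω)) P)
    (hmgf : ∀ u, |u| ≤ 1 → mgf S P u ≤ exp (v * u ^ 2)) (hv : 0 ≤ v) (hs : 0 < s) :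
    P.real {ω | s ≤ |S ω|} ≤ 2 * exp (-(s ^ 2 / (4 * v + 2 * s))) := by
  have hneg : P.real {ω | s ≤ (-S) ω} ≤ exp (-(s ^ 2 / (4 * v + 2 * s))) := by
    refine measureReal_ge_le_of_mgf_le (fun u => by simpa using hint (-u)) (fun u hu => ?_) hv hs
    simpa [mgf_neg] using hmgf (-u) (by rwa [abs_neg])
  have hsplit : {ω | s ≤ |S ω|} ⊆ {ω | s ≤ S ω} ∪ {ω | s ≤ (-S) ω} :=
    fun ω (hω : s ≤ |S ω|) => (le_abs.1 hω : s ≤ S ω ∨ s ≤ -S ω)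
  calc P.real {ω | s ≤ |S ω|} ≤ P.real {ω | s ≤ S ω} + P.real {ω | s ≤ (-S) ω} :=
        (measureReal_mono hsplit).trans (measureReal_union_le _ _)
    _ ≤ 2 * exp (-(s ^ 2 / (4 * v + 2 * s))) := by
        linarith [measureReal_ge_le_of_mgf_le hint hmgf hv hs]

end Chernoff

section Bernstein

variable {α Ω : Type*} [MeasurableSpace α] [MeasurableSpace Ω] {μ : Measure α}
  [IsProbabilityMeasure μ] {P : Measure Ω} [IsProbabilityMeasure P] {X : ℕ → Ω → α} {K : Set α}

lemma measureReal_le_abs_sum_indicator_sub_le (hXm : ∀ i, Measurable (X i))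
    (hindep : iIndepFun X P) (hlaw : ∀ i, P.map (X i) = μ) (hK : MeasurableSet K)
    {n : ℕ} (hn : 0 < n) {t : ℝ} (ht : 0 < t) :
    P.real {ω | n * t ≤ |∑ i ∈ Finset.range n, (K.indicator 1 (X i ω) - μ.real K)|}
      ≤ 2 * exp (-(n * t ^ 2 / (4 * μ.real K + 2 * t))) := by
  set g : α → ℝ := fun x => K.indicator 1 x - μ.real K
  have hg : Measurable g := (measurable_const.indicator hK).sub measurable_const
  have hgX : ∀ i, Measurable (g ∘ X i) := fun i => hg.comp (hXm i)
  have hindep_g : iIndepFun (fun i => g ∘ X i) P := hindep.comp (fun _ => g) fun _ => hg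
  have hint : ∀ u i, Integrable (fun ω => exp (u * (g ∘ X i) ω)) P := fun u i =>
    Integrable.of_bound ((hgX i).const_mul u).exp.aestronglyMeasurable (exp |u|)
      (ae_of_all _ fun ω => by
        rw [norm_of_nonneg (exp_nonneg _), exp_le_exp]
        calc u * g (X i ω) ≤ |u| * |g (X i ω)| := (le_abs_self _).trans (abs_mul _ _).le
          _ ≤ |u| := mul_le_of_le_one_right (abs_nonneg u)
            (abs_indicator_sub_measureReal_le_one _))
  have hmgf : ∀ u, |u| ≤ 1 →
      mgf (∑ i ∈ Finset.range n, g ∘ X i) P u ≤ exp (n * μ.real K * u ^ 2) := by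
    intro u hu
    have hlaw_mgf : ∀ i, mgf (g ∘ X i) P u = mgf g μ u := fun i => by
      rw [← mgf_map (hXm i).aemeasurable, hlaw i]
      exact (hg.const_mul u).exp.aestronglyMeasurable
    rw [hindep_g.mgf_sum hgX, Finset.prod_congr rfl fun i _ => hlaw_mgf i, Finset.prod_const,
      Finset.card_range, mul_assoc, exp_nat_mul]
    exact pow_le_pow_left₀ mgf_nonneg (mgf_indicator_sub_measureReal_le hK hu) n
  have hn' : (0 : ℝ) < n := Nat.cast_pos.2 hn
  have hexponent : (n * t) ^ 2 / (4 * (n * μ.real K) + 2 * (n * t))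
      = n * t ^ 2 / (4 * μ.real K + 2 * t) := by
    have : 0 < 4 * μ.real K + 2 * t := by positivity
    field_simp
  have := measureReal_le_abs_le_of_mgf_le
    (fun u => hindep_g.integrable_exp_mul_sum hgX fun i _ => hint u i) hmgf (by positivity)
    (mul_pos hn' ht)
  simpa only [hexponent, Finset.sum_apply, Function.comp_apply] using this

end Bernstein

section Empirical

variable {α Ω : Type*} [MeasurableSpace α] {X : ℕ → Ω → α} {K : Set α}

noncomputable def empiricalMeasure (X : ℕ → Ω → α) (n : ℕ) (ω : Ω) : Measure α :=
  (n : ℝ≥0∞)⁻¹ • ∑ i ∈ Finset.range n, Measure.dirac (X i ω)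

lemma empiricalMeasure_real_apply (n : ℕ) (ω : Ω) (hK : MeasurableSet K) :
    (empiricalMeasure X n ω).real K = (∑ i ∈ Finset.range n, K.indicator 1 (X i ω)) / n := by
  have hsum : (∑ i ∈ Finset.range n, K.indicator (1 : α → ℝ≥0∞) (X i ω)).toReal
      = ∑ i ∈ Finset.range n, K.indicator 1 (X i ω) := by
    rw [ENNReal.toReal_sum fun i _ => by by_cases h : X i ω ∈ K <;> simp [h]]
    exact Finset.sum_congr rfl fun i _ => by by_cases h : X i ω ∈ K <;> simp [h]
  simp [empiricalMeasure, Measure.real, Measure.dirac_apply' _ hK, hsum, div_eq_inv_mul]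

lemma measureReal_le_abs_empiricalMeasure_sub_le {μ : Measure α} [IsProbabilityMeasure μ]
    [MeasurableSpace Ω] {P : Measure Ω} [IsProbabilityMeasure P] (hXm : ∀ i, Measurable (X i))
    (hindep : iIndepFun X P) (hlaw : ∀ i, P.map (X i) = μ) (hK : MeasurableSet K)
    {n : ℕ} (hn : 0 < n) {t : ℝ} (ht : 0 < t) :
    P.real {ω | t ≤ |(empiricalMeasure X n ω).real K - μ.real K|}
      ≤ 2 * exp (-(n * t ^ 2 / (4 * μ.real K + 2 * t))) := by
  have hn' : (0 : ℝ) < n := Nat.cast_pos.2 hn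
  have hset : ∀ ω, (empiricalMeasure X n ω).real K - μ.real K
      = (∑ i ∈ Finset.range n, (K.indicator 1 (X i ω) - μ.real K)) / n := fun ω => by
    rw [empiricalMeasure_real_apply n ω hK, Finset.sum_sub_distrib, Finset.sum_const,
      Finset.card_range, nsmul_eq_mul]
    field_simp
  simp_rw [hset, abs_div, Nat.abs_cast, le_div_iff₀ hn', mul_comm t]
  exact measureReal_le_abs_sum_indicator_sub_le hXm hindep hlaw hK hn ht

end Empirical

lemma ae_eventually_notMem_of_summable_measureReal {Ω : Type*} [MeasurableSpace Ω]
    {P : Measure Ω} [IsFiniteMeasure P] {s : ℕ → Set Ω} (hs : Summable fun n => P.real (s n)) :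
    ∀ᵐ ω ∂P, ∀ᶠ n in atTop, ω ∉ s n := by
  refine ae_eventually_notMem ?_
  have hreal : ∀ n, P (s n) = ENNReal.ofReal (P.real (s n)) := fun n =>
    (ofReal_measureReal (measure_ne_top _ _)).symm
  simp_rw [hreal, ← ENNReal.ofReal_tsum_of_nonneg (fun _ => measureReal_nonneg) hs]
  exact ENNReal.ofReal_ne_top

lemma withDensity_restrict_apply_le {α : Type*} [MeasurableSpace α] {ν : Measure α}
    {U K : Set α} {ρ : α → ℝ} {C : ℝ} (hK : MeasurableSet K) (hKU : K ⊆ U)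
    (hρC : ∀ x ∈ U, ρ x ≤ C) :
    (ν.restrict U).withDensity (fun x => ENNReal.ofReal (ρ x)) K ≤ ENNReal.ofReal C * ν K := by
  rw [withDensity_apply _ hK, Measure.restrict_restrict hK, Set.inter_eq_self_of_subset_left hKU,
    ← setLIntegral_const]
  exact setLIntegral_mono measurable_const fun x hx => ENNReal.ofReal_le_ofReal (hρC x (hKU hx))

section Cubes

variable {d k : ℕ} {v : Fin d → ℕ}

lemma partitionCube_eq_preimage_pi (d k : ℕ) (v : Fin d → ℕ) :
    partitionCube d k v = (MeasurableEquiv.toLp 2 (Fin d → ℝ)).symm ⁻¹'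
      Set.univ.pi fun i => Set.Ico ((v i : ℝ) / k) (((v i : ℝ) + 1) / k) := by
  ext x
  simp [partitionCube, MeasurableEquiv.toLp_symm_apply, Set.mem_pi]

lemma measurableSet_partitionCube : MeasurableSet (partitionCube d k v) := by
  rw [partitionCube_eq_preimage_pi]
  exact (MeasurableEquiv.measurable _) (MeasurableSet.univ_pi fun _ => measurableSet_Ico)

lemma volume_partitionCube : volume (partitionCube d k v) = ENNReal.ofReal ((k : ℝ) ^ d)⁻¹ := by
  rw [partitionCube_eq_preimage_pi, (EuclideanSpace.volume_preserving_symm_measurableEquiv_toLp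
    (Fin d)).measure_preimage (MeasurableSet.univ_pi fun _ => measurableSet_Ico).nullMeasurableSet,
    volume_pi_pi]
  simp only [Real.volume_Ico, add_div, add_sub_cancel_left, Finset.prod_const, Finset.card_univ,
    Fintype.card_fin, one_div]
  rw [← ENNReal.ofReal_pow (by positivity), inv_pow]

lemma partitionCube_subset_unitCube (hv : ∀ i, v i < k) :
    partitionCube d k v ⊆ {x | ∀ i, x i ∈ Set.Ico (0 : ℝ) 1} := by
  intro x hx i
  have hk : (0 : ℝ) < k := by exact_mod_cast (Nat.zero_le _).trans_lt (hv i)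
  have hvk : (v i : ℝ) + 1 ≤ k := by exact_mod_cast hv i
  exact ⟨(by positivity : (0 : ℝ) ≤ v i / k).trans (hx i).1,
    (hx i).2.trans_le ((div_le_one hk).2 hvk)⟩

lemma measureReal_partitionCube_le {ρ : EuclideanSpace ℝ (Fin d) → ℝ} {C : ℝ} (hC : 0 ≤ C)
    (hρC : ∀ x : EuclideanSpace ℝ (Fin d), (∀ i, x i ∈ Set.Ico (0 : ℝ) 1) → ρ x ≤ C) (hv : ∀ i, v i < k) :
    ((volume.restrict {x : EuclideanSpace ℝ (Fin d) | ∀ i, x i ∈ Set.Ico (0 : ℝ) 1}).withDensity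
      fun x => ENNReal.ofReal (ρ x)).real (partitionCube d k v) ≤ C * ((k : ℝ) ^ d)⁻¹ := by
  refine ENNReal.toReal_le_of_le_ofReal (by positivity) ?_
  rw [ENNReal.ofReal_mul hC, ← volume_partitionCube]
  exact withDensity_restrict_apply_le measurableSet_partitionCube
    (partitionCube_subset_unitCube hv) hρC

end Cubes

lemma three_mul_le_bernstein_exponent {n L b c C p : ℝ} (hn : 0 < n) (hL : 0 < L) (hb : 0 < b)
    (hc : 12 ≤ c) (hcb : 24 * C ≤ c ^ 2 / b) (hp0 : 0 ≤ p) (hp : p ≤ C * (b * L / n)) :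
    3 * L ≤ n * (c * L / n) ^ 2 / (4 * p + 2 * (c * L / n)) := by
  have hpn : p * n ≤ C * b * L := by
    rw [mul_div_assoc', le_div_iff₀ hn] at hp
    linarith
  have hcb' : 24 * C * b ≤ c ^ 2 := (le_div_iff₀ hb).1 hcb
  rw [le_div_iff₀ (by positivity)]
  have key : n * (c * L / n) ^ 2 - 3 * L * (4 * p + 2 * (c * L / n))
      = L * (c ^ 2 * L - 12 * (p * n) - 6 * c * L) / n := by
    field_simp
    ring
  have : 0 ≤ L * (c ^ 2 * L - 12 * (p * n) - 6 * c * L) / n := by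
    apply div_nonneg _ hn.le
    apply mul_nonneg hL.le
    have h12c : 12 * c ≤ c ^ 2 := by nlinarith
    nlinarith [mul_le_mul_of_nonneg_right hcb' hL.le, mul_le_mul_of_nonneg_right h12c hL.le]
  linarith

section Concentration

variable {d k n : ℕ} {Ω : Type*} [MeasurableSpace Ω] {P : Measure Ω} [IsProbabilityMeasure P]
  {μ : Measure (EuclideanSpace ℝ (Fin d))} [IsProbabilityMeasure μ]
  {X : ℕ → Ω → EuclideanSpace ℝ (Fin d)}

lemma measureReal_partitionCube_deviation_le (hXm : ∀ i, Measurable (X i))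
    (hindep : iIndepFun X P) (hlaw : ∀ i, P.map (X i) = μ) {b c C : ℝ} (hn : 2 ≤ n)
    (hb : 1 ≤ b) (hlog : 1 ≤ log n) (hc : 12 ≤ c) (hcb : 24 * C ≤ c ^ 2 / b)
    (hkd : (k : ℝ) ^ d = n / (b * log n)) {v : Fin d → ℕ}
    (hμK : μ.real (partitionCube d k v) ≤ C * ((k : ℝ) ^ d)⁻¹) :
    P.real {ω | c * log n / n ≤
        |(empiricalMeasure X n ω).real (partitionCube d k v) - μ.real (partitionCube d k v)|}
      ≤ 2 / (n : ℝ) ^ 3 := by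
  have hn' : (0 : ℝ) < n := by positivity
  have hL : 0 < log n := one_pos.trans_le hlog
  refine (measureReal_le_abs_empiricalMeasure_sub_le hXm hindep hlaw measurableSet_partitionCube
    (by omega) (by positivity)).trans ?_
  rw [hkd, inv_div] at hμK
  have hexp := three_mul_le_bernstein_exponent hn' hL (by linarith) hc hcb measureReal_nonneg hμK
  calc 2 * exp (-(n * (c * log n / n) ^ 2 / (4 * μ.real (partitionCube d k v) +
        2 * (c * log n / n)))) ≤ 2 * exp (-(3 * log n)) := by gcongr
    _ = 2 / (n : ℝ) ^ 3 := by
        rw [show (3 : ℝ) * log n = log ((n : ℝ) ^ 3) by rw [Real.log_pow]; norm_num, exp_neg,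
          exp_log (by positivity), div_eq_mul_inv]

lemma measureReal_exists_partitionCube_deviation_le (hXm : ∀ i, Measurable (X i))
    (hindep : iIndepFun X P) (hlaw : ∀ i, P.map (X i) = μ) {b c C : ℝ} (hn : 2 ≤ n)
    (hb : 1 ≤ b) (hlog : 1 ≤ log n) (hc : 12 ≤ c) (hcb : 24 * C ≤ c ^ 2 / b)
    (hkd : (k : ℝ) ^ d = n / (b * log n))
    (hμK : ∀ v : Fin d → ℕ, (∀ i, v i < k) →
      μ.real (partitionCube d k v) ≤ C * ((k : ℝ) ^ d)⁻¹) :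
    P.real {ω | ∃ v : Fin d → ℕ, (∀ i, v i < k) ∧ c * log n / n ≤
        |(empiricalMeasure X n ω).real (partitionCube d k v) - μ.real (partitionCube d k v)|}
      ≤ 2 / (n : ℝ) ^ 2 := by
  set cubes := Fintype.piFinset fun _ : Fin d => Finset.range k
  have hmem : ∀ v, v ∈ cubes ↔ ∀ i, v i < k := by simp [cubes]
  have hcard : (cubes.card : ℝ) ≤ n := by
    have hbL : 1 ≤ b * log n := one_le_mul_of_one_le_of_one_le hb hlog
    rw [Fintype.card_piFinset, Finset.prod_const, Finset.card_range, Finset.card_univ,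
      Fintype.card_fin, Nat.cast_pow, hkd]
    exact div_le_self (Nat.cast_nonneg n) hbL
  have hn' : (0 : ℝ) < n := by positivity
  calc _ ≤ P.real (⋃ v ∈ cubes, {ω | c * log n / n ≤
        |(empiricalMeasure X n ω).real (partitionCube d k v) - μ.real (partitionCube d k v)|}) :=
        measureReal_mono (by rintro ω ⟨v, hv, hω⟩; exact Set.mem_biUnion ((hmem v).2 hv) hω)
          (measure_ne_top _ _)
    _ ≤ ∑ v ∈ cubes, 2 / (n : ℝ) ^ 3 := (measureReal_biUnion_finset_le _ _).trans
        (Finset.sum_le_sum fun v hv => measureReal_partitionCube_deviation_le hXm hindep hlaw hn hb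
          hlog hc hcb hkd (hμK v ((hmem v).1 hv)))
    _ ≤ n * (2 / (n : ℝ) ^ 3) := by
        rw [Finset.sum_const, nsmul_eq_mul]
        gcongr
    _ = 2 / (n : ℝ) ^ 2 := by field_simp

end Concentration

theorem empirical_concentration_on_boxes_general (d : ℕ)
    {Ω' : Type*} [MeasurableSpace Ω'] (P : Measure Ω') [IsProbabilityMeasure P]
    (c C : ℝ) (hc : 0 < c)
    (ρ : EuclideanSpace ℝ (Fin d) → ℝ)
    (hρb : ∀ x : EuclideanSpace ℝ (Fin d),
      (∀ i, x i ∈ Set.Ico (0 : ℝ) 1) → c ≤ ρ x ∧ ρ x ≤ C)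
    (μ : Measure (EuclideanSpace ℝ (Fin d)))
    (hμ : μ = (volume.restrict {x : EuclideanSpace ℝ (Fin d) |
        ∀ i, x i ∈ Set.Ico (0 : ℝ) 1}).withDensity fun x => ENNReal.ofReal (ρ x))
    (X : ℕ → Ω' → EuclideanSpace ℝ (Fin d)) (hXm : ∀ i, Measurable (X i))
    (hiid : ProbabilityTheory.iIndepFun X P)
    (hlaw : ∀ i, Measure.map (X i) P = μ)
    (b cseq : ℕ → ℝ)
    (hbtop : Tendsto b atTop atTop) (hctop : Tendsto cseq atTop atTop)
    (hc2b : Tendsto (fun n => cseq n ^ 2 / b n) atTop atTop)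
    (k : ℕ → ℕ)
    (hkd : ∀ n : ℕ, 2 ≤ n → ((k n : ℝ)) ^ d = (n : ℝ) / (b n * Real.log n)) :
    ∀ᵐ ω ∂P, ∀ᶠ n : ℕ in atTop, ∀ v : Fin d → ℕ, (∀ i, v i < k n) →
      |(((n : ℝ≥0∞)⁻¹ • ∑ i ∈ Finset.range n, Measure.dirac (X i ω))
            (partitionCube d (k n) v)).toReal -
          (μ (partitionCube d (k n) v)).toReal| < cseq n * Real.log n / n := by
  have : IsProbabilityMeasure μ := hlaw 0 ▸ Measure.isProbabilityMeasure_map (hXm 0).aemeasurable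
  have hC : 0 ≤ C := by
    obtain ⟨hcρ, hρC⟩ := hρb 0 fun i => by simp
    linarith
  have hμK : ∀ n v, (∀ i, v i < k n) → μ.real (partitionCube d (k n) v) ≤ C * ((k n : ℝ) ^ d)⁻¹ :=
    fun n v hv => hμ ▸ measureReal_partitionCube_le hC (fun x hx => (hρb x hx).2) hv
  have hbad : ∀ᶠ n : ℕ in atTop, ‖P.real {ω | ∃ v : Fin d → ℕ, (∀ i, v i < k n) ∧
      cseq n * log n / n ≤ |(empiricalMeasure X n ω).real (partitionCube d (k n) v) -
        μ.real (partitionCube d (k n) v)|}‖ ≤ 2 * ((n : ℝ) ^ 2)⁻¹ := by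
    filter_upwards [eventually_ge_atTop 2, hbtop.eventually_ge_atTop 1,
      (tendsto_log_atTop.comp tendsto_natCast_atTop_atTop).eventually_ge_atTop 1,
      hctop.eventually_ge_atTop 12, hc2b.eventually_ge_atTop (24 * C)] with n hn hb hlog hc12 hcb
    rw [norm_of_nonneg measureReal_nonneg, ← div_eq_mul_inv]
    exact measureReal_exists_partitionCube_deviation_le hXm hiid hlaw hn hb hlog hc12 hcb
      (hkd n hn) (hμK n)
  filter_upwards [ae_eventually_notMem_of_summable_measureReal <|
    .of_norm_bounded_eventually_nat ((summable_nat_pow_inv.2 one_lt_two).mul_left 2) hbad]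
    with ω hω
  filter_upwards [hω] with n hn v hv
  exact not_le.1 fun h => hn ⟨v, hv, h⟩

/-- Concentration on boxes: almost surely, for all sufficiently large `n`, the empirical measure
of every cube `K_j^n` in the dyadic-type partition of `[0,1)^d` into `m_n = n/(b_n log n)` cubes
of side `δ_n = (b_n log n/n)^{1/d}` deviates from its mean by less than `c_n log n / n`. -/
theorem empirical_concentration_on_boxes (d : ℕ) (hd : 1 ≤ d)
    {Ω' : Type*} [MeasurableSpace Ω'] (P : Measure Ω') [IsProbabilityMeasure P]
    (c C : ℝ) (hc : 0 < c)
    (ρ : EuclideanSpace ℝ (Fin d) → ℝ) (hρm : Measurable ρ)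
    (hρb : ∀ x : EuclideanSpace ℝ (Fin d),
      (∀ i, x i ∈ Set.Ico (0 : ℝ) 1) → c ≤ ρ x ∧ ρ x ≤ C)
    (μ : Measure (EuclideanSpace ℝ (Fin d)))
    (hμ : μ = (volume.restrict {x : EuclideanSpace ℝ (Fin d) |
        ∀ i, x i ∈ Set.Ico (0 : ℝ) 1}).withDensity fun x => ENNReal.ofReal (ρ x))
    (hμprob : IsProbabilityMeasure μ)
    (X : ℕ → Ω' → EuclideanSpace ℝ (Fin d)) (hXm : ∀ i, Measurable (X i))
    (hiid : ProbabilityTheory.iIndepFun X P)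
    (hlaw : ∀ i, Measure.map (X i) P = μ)
    (b cseq : ℕ → ℝ) (hb : ∀ n, 0 < b n) (hcseq : ∀ n, 0 < cseq n)
    (hbtop : Tendsto b atTop atTop) (hctop : Tendsto cseq atTop atTop)
    (hc2b : Tendsto (fun n => cseq n ^ 2 / b n) atTop atTop)
    (k : ℕ → ℕ) (hk : ∀ n, 0 < k n)
    (hkd : ∀ n : ℕ, 2 ≤ n → ((k n : ℝ)) ^ d = (n : ℝ) / (b n * Real.log n)) :
    ∀ᵐ ω ∂P, ∀ᶠ n : ℕ in atTop, ∀ v : Fin d → ℕ, (∀ i, v i < k n) →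
      |(((n : ℝ≥0∞)⁻¹ • ∑ i ∈ Finset.range n, Measure.dirac (X i ω))
            (partitionCube d (k n) v)).toReal -
          (μ (partitionCube d (k n) v)).toReal| < cseq n * Real.log n / n :=
  empirical_concentration_on_boxes_general d P c C hc ρ hρb μ hμ X hXm hiid hlaw b cseq hbtop hctop
    hc2b k hkd
end
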